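/- arXiv:1210.7970 — 4 statements merged into one kernel-verified Lean document; each statement's English description precedes it below -/
import Mathlib

section
/- Let S be a strategy profile of the Sum version of the network creation game that is a Sum greedy equilibrium and whose induced graph T is a tree. If agent u owns the edge {u,w} (i.e., w ∈ S_u), then w is a 1-median of its connected component in the forest obtained from T by deleting the vertex u. -/
open scoped Classical

/-- The simple graph induced by a strategy profile: `{u,v}` is an edge
iff `u ∈ S v` or `v ∈ S u`. -/
def indGraph {V : Type*} (S : V → Finset V) : SimpleGraph V where
  Adj u v := u ≠ v ∧ (u ∈ S v ∨ v ∈ S u)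
  symm := ⟨fun u v h => ⟨h.1.symm, h.2.symm⟩⟩
  loopless := ⟨fun u h => h.1 rfl⟩

/-- A strategy profile is valid if no agent buys an edge to herself,
i.e. `S v ⊆ V \ {v}` for every agent `v`. -/
def ValidProfile {V : Type*} (S : V → Finset V) : Prop := ∀ v, v ∉ S v

/-- Sum-version cost of agent `v`: `α·|S_v| + Σ_w d(v,w)` if the induced graph is
connected, and `∞` otherwise. -/
noncomputable def sumCost {V : Type*} [Fintype V] (α : ℝ) (S : V → Finset V) (v : V) : EReal :=
  if (indGraph S).Connected then
    ((α * (S v).card + ∑ w : V, ((indGraph S).dist v w : ℝ) : ℝ) : EReal)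
  else ⊤

/-- Maximum (shortest-path) distance from `v` to any vertex in the induced graph. -/
noncomputable def maxDist {V : Type*} [Fintype V] (S : V → Finset V) (v : V) : ℕ :=
  Finset.univ.sup fun w : V => (indGraph S).dist v w

/-- Max-version cost of agent `v`: `α·|S_v| + max_w d(v,w)` if the induced graph is
connected, and `∞` otherwise. -/
noncomputable def maxCost {V : Type*} [Fintype V] (α : ℝ) (S : V → Finset V) (v : V) : EReal :=
  if (indGraph S).Connected then
    ((α * (S v).card + (maxDist S v : ℝ) : ℝ) : EReal)
  else ⊤

/-- Pure Nash equilibrium w.r.t. an abstract cost function: no agent can strictly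
decrease her cost by unilaterally replacing her strategy with any other valid set. -/
def isNE {V : Type*} [DecidableEq V] (cost : (V → Finset V) → V → EReal)
    (S : V → Finset V) : Prop :=
  ∀ (v : V) (T : Finset V), v ∉ T →
    ¬ cost (Function.update S v T) v < cost S v

/-- Greedy equilibrium: no agent can strictly decrease her cost by adding a single
vertex to her strategy set, removing a single vertex, or exchanging a single vertex
of her set for another vertex. -/
def isGE {V : Type*} [DecidableEq V] (cost : (V → Finset V) → V → EReal)
    (S : V → Finset V) : Prop :=
  (∀ v x : V, x ≠ v → x ∉ S v →
    ¬ cost (Function.update S v (insert x (S v))) v < cost S v) ∧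
  (∀ v x : V, x ∈ S v →
    ¬ cost (Function.update S v ((S v).erase x)) v < cost S v) ∧
  (∀ v x y : V, x ∈ S v → y ≠ v → y ∉ S v →
    ¬ cost (Function.update S v (insert y ((S v).erase x))) v < cost S v)

/-- `β`-approximate Nash equilibrium: every agent's current cost is at most `β` times
the cost of each (hence of the best) unilateral deviation. -/
def isApproxNE {V : Type*} [DecidableEq V] (β : ℝ)
    (cost : (V → Finset V) → V → EReal) (S : V → Finset V) : Prop :=
  ∀ (v : V) (T : Finset V), v ∉ T →
    cost S v ≤ (β : EReal) * cost (Function.update S v T) v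

/-- Diameter of a graph on a finite vertex set. -/
noncomputable def gdiam {V : Type*} [Fintype V] (G : SimpleGraph V) : ℕ :=
  Finset.univ.sup fun p : V × V => G.dist p.1 p.2

/-- `G` is a star: there is a center adjacent to exactly the other vertices,
and there are no other edges. -/
def IsStar {V : Type*} (G : SimpleGraph V) : Prop :=
  ∃ c : V, ∀ a b : V, G.Adj a b ↔ (a = c ∧ b ≠ c) ∨ (b = c ∧ a ≠ c)

/-- A Cheap Star: a Max greedy equilibrium whose induced graph is a star on
`n ≥ 4` vertices with `α < 1/(n-2)`. -/
def CheapStar {V : Type*} [Fintype V] [DecidableEq V] (α : ℝ) (S : V → Finset V) : Prop :=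
  isGE (maxCost α) S ∧ IsStar (indGraph S) ∧ 4 ≤ Fintype.card V ∧
    α < 1 / ((Fintype.card V : ℝ) - 2)

/-- A Badly Connected Tree: a Max greedy equilibrium whose induced graph is a tree and
in which some agent can strictly decrease her cost by simultaneously exchanging `k > 1`
vertices of her strategy set for `k` other vertices (a multi-swap). -/
def BadlyConnectedTree {V : Type*} [Fintype V] [DecidableEq V] (α : ℝ)
    (S : V → Finset V) : Prop :=
  isGE (maxCost α) S ∧ (indGraph S).IsTree ∧
  ∃ (u : V) (X Y : Finset V), X ⊆ S u ∧ (∀ y ∈ Y, y ≠ u ∧ y ∉ S u) ∧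
    1 < X.card ∧ X.card = Y.card ∧
    maxCost α (Function.update S u ((S u \ X) ∪ Y)) u < maxCost α S u

/-- A Cheap Network: a profile that is a Max greedy equilibrium for every
edge price `α'` with `0 < α' ≤ α`. -/
def CheapNetwork {V : Type*} [Fintype V] [DecidableEq V] (α : ℝ)
    (S : V → Finset V) : Prop :=
  0 < α ∧ ∀ α' : ℝ, 0 < α' → α' ≤ α → isGE (maxCost α') S

section AuxLemmas

variable {V : Type*}

lemma indGraph_adj {S : V → Finset V} {a b : V} :
    (indGraph S).Adj a b ↔ a ≠ b ∧ (a ∈ S b ∨ b ∈ S a) := Iff.rfl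

/-- Homomorphism from the induced subgraph on `{y | y ≠ u}` back to the graph. -/
def homOut (G : SimpleGraph V) (u : V) : G.induce {y : V | y ≠ u} →g G where
  toFun := Subtype.val
  map_rel' := fun {a b} h => by simpa using h

@[simp] lemma homOut_apply (G : SimpleGraph V) (u : V) (a : {y : V | y ≠ u}) :
    homOut G u a = a.val := rfl

lemma lift_walk_avoid {G : SimpleGraph V} {u a b : V} (p : G.Walk a b) :
    ∀ (ha : a ≠ u) (hb : b ≠ u), (∀ v ∈ p.support, v ≠ u) →
      ∃ q : (G.induce {y : V | y ≠ u}).Walk ⟨a, ha⟩ ⟨b, hb⟩, q.length = p.length := by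
  induction p with
  | nil => exact fun ha hb _ => ⟨SimpleGraph.Walk.nil, rfl⟩
  | @cons a c b h q ih =>
    intro ha hb hp
    have hc : c ≠ u := hp c (by simp)
    obtain ⟨q', hq'⟩ := ih hc hb fun v hv => hp v (by simp [hv])
    exact ⟨SimpleGraph.Walk.cons (by simpa using h) q', by simp [hq']⟩

/-- In an acyclic graph, if `u` is adjacent to both `w` and `y`, and `y` is connected to `w`
avoiding `u`, then `y = w`. -/
lemma first_step_eq {G : SimpleGraph V} (hac : G.IsAcyclic) {u w y : V}
    (hwu : w ≠ u) (hyu : y ≠ u) (huw : G.Adj u w) (huy : G.Adj u y)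
    (hr : (G.induce {y : V | y ≠ u}).Reachable ⟨y, hyu⟩ ⟨w, hwu⟩) : y = w := by
  obtain ⟨r⟩ := hr
  have hval : Function.Injective (homOut G u) := fun a b h => Subtype.ext h
  obtain ⟨rp, hrpsup⟩ : ∃ rp : G.Path y w, u ∉ (rp : G.Walk y w).support := by
    refine ⟨r.toPath.map (homOut G u) hval, ?_⟩
    rw [SimpleGraph.Path.map_coe]
    intro hmem
    have hmem' : u ∈ ((r.toPath : (G.induce {y : V | y ≠ u}).Walk ⟨y, hyu⟩ ⟨w, hwu⟩).map
      (homOut G u)).support := hmem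
    rw [SimpleGraph.Walk.support_map] at hmem'
    obtain ⟨a, _, ha⟩ := List.mem_map.mp hmem'
    exact a.2 ha
  have hP2 : (SimpleGraph.Walk.cons huy (rp : G.Walk y w)).IsPath :=
    (SimpleGraph.Walk.cons_isPath_iff _ _).mpr ⟨rp.2, hrpsup⟩
  have hEq := hac.path_unique (SimpleGraph.Path.singleton huw) ⟨_, hP2⟩
  have hsup := congrArg (fun P : G.Path u w => (P : G.Walk u w).support) hEq
  simp only [SimpleGraph.Path.singleton, SimpleGraph.Walk.support_cons,
    SimpleGraph.Walk.support_nil] at hsup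
  rw [SimpleGraph.Walk.support_eq_cons (rp : G.Walk y w)] at hsup
  exact (List.cons_eq_cons.mp (List.cons_eq_cons.mp hsup).2).1.symm

end AuxLemmas


/-- In a Sum greedy equilibrium on a tree, if agent `u` owns the edge
`{u,w}` then `w` is a 1-median of its connected component of the forest obtained
by deleting the vertex `u`. -/
theorem sumGE_tree_bought_vertex_is_median {V : Type*} [Fintype V] [DecidableEq V]
    (α : ℝ) (hα : 0 < α) (S : V → Finset V) (hS : ValidProfile S)
    (hn : 2 ≤ Fintype.card V)
    (hGE : isGE (sumCost α) S) (htree : (indGraph S).IsTree)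
    (u w : V) (hw : w ∈ S u) (hwu : w ≠ u) :
    ∀ x : {y : V | y ≠ u},
      ((indGraph S).induce {y : V | y ≠ u}).Reachable ⟨w, hwu⟩ x →
      (∑ z : {y : V | y ≠ u},
          if ((indGraph S).induce {y : V | y ≠ u}).Reachable ⟨w, hwu⟩ z
          then ((indGraph S).induce {y : V | y ≠ u}).dist ⟨w, hwu⟩ z else 0) ≤
      (∑ z : {y : V | y ≠ u},
          if ((indGraph S).induce {y : V | y ≠ u}).Reachable ⟨w, hwu⟩ z
          then ((indGraph S).induce {y : V | y ≠ u}).dist x z else 0) := by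
  intro x hreach
  by_cases hxw : x = (⟨w, hwu⟩ : {y : V | y ≠ u})
  · subst hxw; exact le_rfl
  have hconn : (indGraph S).Connected := htree.isConnected
  have hac : (indGraph S).IsAcyclic := htree.IsAcyclic
  have huwAdj : (indGraph S).Adj u w := ⟨hwu.symm, Or.inr hw⟩
  have hxvu : x.val ≠ u := x.2
  have hxvw : x.val ≠ w := fun h => hxw (Subtype.ext h)
  have hnadj : ¬ (indGraph S).Adj u x.val := by
    intro hadj
    exact hxvw (first_step_eq hac hwu hxvu huwAdj hadj hreach.symm)
  have hxSu : x.val ∉ S u := fun h => hnadj ⟨Ne.symm hxvu, Or.inr h⟩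
  -- the greedy equilibrium swap condition
  have hswap := hGE.2.2 u w x.val hw hxvu hxSu
  have hle : sumCost α S u ≤ sumCost α (Function.update S u (insert x.val ((S u).erase w))) u :=
    not_lt.mp hswap
  set T : SimpleGraph V := indGraph S with hT
  set H : SimpleGraph {y : V | y ≠ u} := T.induce {y : V | y ≠ u} with hH
  set t : Finset V := insert x.val ((S u).erase w) with ht
  set S' : V → Finset V := Function.update S u t with hS'
  set T' : SimpleGraph V := indGraph S' with hT'
  have hcard : t.card = (S u).card := by
    rw [ht, Finset.card_insert_of_notMem (fun h => hxSu (Finset.mem_of_mem_erase h)),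
      Finset.card_erase_of_mem hw]
    have : 1 ≤ (S u).card := Finset.card_pos.mpr ⟨w, hw⟩
    omega
  -- adjacency facts for T'
  have hA1 : ∀ a b : V, a ≠ u → b ≠ u → (T'.Adj a b ↔ T.Adj a b) := by
    intro a b ha hb
    rw [hT', hT, indGraph_adj, indGraph_adj, hS',
      Function.update_of_ne ha _ _, Function.update_of_ne hb _ _]
  have hA2 : T'.Adj u x.val := by
    refine ⟨Ne.symm hxvu, Or.inr ?_⟩
    rw [hS', Function.update_self, ht]
    exact Finset.mem_insert_self _ _
  have hA3 : ∀ b : V, b ≠ u → b ≠ w → T.Adj u b → T'.Adj u b := by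
    intro b hbu hbw hadj
    refine ⟨hadj.1, ?_⟩
    rcases hadj.2 with h | h
    · left; rwa [hS', Function.update_of_ne hbu _ _]
    · right; rw [hS', Function.update_self, ht]
      exact Finset.mem_insert_of_mem (Finset.mem_erase.mpr ⟨hbw, h⟩)
  -- homomorphism from H into T'
  have hhomT' : ∀ {a b : {y : V | y ≠ u}}, H.Adj a b → T'.Adj a.val b.val := by
    intro a b h
    exact (hA1 a.val b.val a.2 b.2).mpr (by simpa [hH] using h)
  let ι' : H →g T' := ⟨fun a => a.val, fun {a b} h => hhomT' h⟩
  -- shortest path decomposition in T from u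
  have hdecomp : ∀ z : V, z ≠ u →
      ∃ (y : V) (hadj : T.Adj u y) (q : T.Walk y z),
        (∀ v ∈ q.support, v ≠ u) ∧ q.length + 1 = T.dist u z := by
    intro z hz
    obtain ⟨p, hlen⟩ := (hconn.preconnected u z).exists_walk_length_eq_dist
    have hbp : p.bypass.IsPath := p.bypass_isPath
    have hblen : p.bypass.length = T.dist u z :=
      le_antisymm (hlen ▸ p.length_bypass_le) (SimpleGraph.dist_le _)
    obtain ⟨y, hadj, q, hq⟩ := SimpleGraph.Walk.exists_eq_cons_of_ne (Ne.symm hz) p.bypass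
    rw [hq, SimpleGraph.Walk.cons_isPath_iff] at hbp
    refine ⟨y, hadj, q, fun v hv hvu => hbp.2 (hvu ▸ hv), ?_⟩
    rw [← hblen, hq, SimpleGraph.Walk.length_cons]
  -- Claim A : lower bound for distances in T
  have claimA : ∀ z : V, ∀ hz : z ≠ u, H.Reachable ⟨w, hwu⟩ ⟨z, hz⟩ →
      1 + H.dist ⟨w, hwu⟩ ⟨z, hz⟩ ≤ T.dist u z := by
    intro z hz hrz
    obtain ⟨y, hadj, q, hqa, hqlen⟩ := hdecomp z hz
    have hyu : y ≠ u := hqa y q.start_mem_support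
    obtain ⟨q', hq'⟩ := lift_walk_avoid q hyu hz hqa
    have hyw : y = w := by
      refine first_step_eq hac hwu hyu huwAdj hadj ?_
      exact (SimpleGraph.Walk.reachable q').trans hrz.symm
    subst hyw
    have hdle : H.dist ⟨y, hwu⟩ ⟨z, hz⟩ ≤ q'.length := SimpleGraph.dist_le q'
    omega
  -- Claims B and C : upper bounds for distances in T', with reachability
  have claimB : ∀ z : V, ∀ hz : z ≠ u, H.Reachable ⟨w, hwu⟩ ⟨z, hz⟩ →
      T'.Reachable u z ∧ T'.dist u z ≤ 1 + H.dist x ⟨z, hz⟩ := by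
    intro z hz hrz
    obtain ⟨r, hrlen⟩ := (hreach.symm.trans hrz).exists_walk_length_eq_dist
    have hdl : T'.dist u z ≤ (SimpleGraph.Walk.cons hA2 (r.map ι')).length :=
      SimpleGraph.dist_le _
    rw [SimpleGraph.Walk.length_cons, SimpleGraph.Walk.length_map, hrlen] at hdl
    exact ⟨⟨SimpleGraph.Walk.cons hA2 (r.map ι')⟩, by omega⟩
  have claimC : ∀ z : V, ∀ hz : z ≠ u, ¬ H.Reachable ⟨w, hwu⟩ ⟨z, hz⟩ →
      T'.Reachable u z ∧ T'.dist u z ≤ T.dist u z := by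
    intro z hz hrz
    obtain ⟨y, hadj, q, hqa, hqlen⟩ := hdecomp z hz
    have hyu : y ≠ u := hqa y q.start_mem_support
    obtain ⟨q', hq'⟩ := lift_walk_avoid q hyu hz hqa
    have hyw : y ≠ w := by
      intro h; subst h
      exact hrz (SimpleGraph.Walk.reachable q')
    have hadj' : T'.Adj u y := hA3 y hyu hyw hadj
    have hdl : T'.dist u z ≤ (SimpleGraph.Walk.cons hadj' (q'.map ι')).length :=
      SimpleGraph.dist_le _
    rw [SimpleGraph.Walk.length_cons, SimpleGraph.Walk.length_map, hq'] at hdl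
    exact ⟨⟨SimpleGraph.Walk.cons hadj' (q'.map ι')⟩, by omega⟩
  -- T' is connected
  have hreachU : ∀ z : V, T'.Reachable u z := by
    intro z
    by_cases hz : z = u
    · rw [hz]
    · by_cases hrz : H.Reachable ⟨w, hwu⟩ ⟨z, hz⟩
      · exact (claimB z hz hrz).1
      · exact (claimC z hz hrz).1
  have hconn' : T'.Connected := by
    rw [SimpleGraph.connected_iff]
    exact ⟨fun a b => (hreachU a).symm.trans (hreachU b), ⟨u⟩⟩
  -- extract the distance-sum inequality
  rw [sumCost, sumCost] at hle
  rw [← hT, ← hT'] at hle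
  rw [if_pos hconn, if_pos hconn'] at hle
  rw [EReal.coe_le_coe_iff] at hle
  have hdist_le : (∑ z : V, T.dist u z) ≤ ∑ z : V, T'.dist u z := by
    have h1 : ((S' u).card : ℝ) = ((S u).card : ℝ) := by
      rw [hS', Function.update_self, hcard]
    rw [h1] at hle
    have h2 : (∑ z : V, (T.dist u z : ℝ)) ≤ ∑ z : V, (T'.dist u z : ℝ) :=
      le_of_add_le_add_left hle
    exact_mod_cast h2
  -- pointwise bounds
  classical
  set Fw : V → ℕ := fun z =>
    if hz : z ≠ u then
      (if H.Reachable ⟨w, hwu⟩ ⟨z, hz⟩ then 1 + H.dist ⟨w, hwu⟩ ⟨z, hz⟩ else T.dist u z)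
    else 0 with hFw
  set Fx : V → ℕ := fun z =>
    if hz : z ≠ u then
      (if H.Reachable ⟨w, hwu⟩ ⟨z, hz⟩ then 1 + H.dist x ⟨z, hz⟩ else T.dist u z)
    else 0 with hFx
  have hFweq : ∀ (z : V) (hz : z ≠ u), Fw z =
      if H.Reachable ⟨w, hwu⟩ ⟨z, hz⟩ then 1 + H.dist ⟨w, hwu⟩ ⟨z, hz⟩ else T.dist u z :=
    fun z hz => dif_pos hz
  have hFxeq : ∀ (z : V) (hz : z ≠ u), Fx z =
      if H.Reachable ⟨w, hwu⟩ ⟨z, hz⟩ then 1 + H.dist x ⟨z, hz⟩ else T.dist u z :=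
    fun z hz => dif_pos hz
  have hFw0 : Fw u = 0 := dif_neg (fun h => h rfl)
  have hFx0 : Fx u = 0 := dif_neg (fun h => h rfl)
  have hFwsub : ∀ z : {y : V | y ≠ u}, Fw z.val =
      if H.Reachable ⟨w, hwu⟩ z then 1 + H.dist ⟨w, hwu⟩ z else T.dist u z.val :=
    fun z => dif_pos z.2
  have hFxsub : ∀ z : {y : V | y ≠ u}, Fx z.val =
      if H.Reachable ⟨w, hwu⟩ z then 1 + H.dist x z else T.dist u z.val :=
    fun z => dif_pos z.2
  have hsum1 : (∑ z : V, Fw z) ≤ ∑ z : V, T.dist u z := by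
    refine Finset.sum_le_sum fun z _ => ?_
    by_cases hz : z ≠ u
    · rw [hFweq z hz]
      by_cases hrz : H.Reachable ⟨w, hwu⟩ ⟨z, hz⟩
      · rw [if_pos hrz]; exact claimA z hz hrz
      · rw [if_neg hrz]
    · rw [not_ne_iff] at hz
      rw [hz, hFw0]
      exact Nat.zero_le _
  have hsum2 : (∑ z : V, T'.dist u z) ≤ ∑ z : V, Fx z := by
    refine Finset.sum_le_sum fun z _ => ?_
    by_cases hz : z ≠ u
    · rw [hFxeq z hz]
      by_cases hrz : H.Reachable ⟨w, hwu⟩ ⟨z, hz⟩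
      · rw [if_pos hrz]; exact (claimB z hz hrz).2
      · rw [if_neg hrz]; exact (claimC z hz hrz).2
    · rw [not_ne_iff] at hz
      rw [hz, hFx0]
      simp [SimpleGraph.dist_self]
  have hFF : (∑ z : V, Fw z) ≤ ∑ z : V, Fx z :=
    le_trans hsum1 (le_trans hdist_le hsum2)
  -- convert to sums over the subtype
  have hconv : ∀ F : V → ℕ, F u = 0 →
      (∑ z : V, F z) = ∑ z : {y : V | y ≠ u}, F z.val := by
    intro F hF
    rw [← Finset.sum_erase Finset.univ hF]
    exact Finset.sum_subtype _ (fun z => by simp [Finset.mem_erase]) _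
  rw [hconv Fw hFw0, hconv Fx hFx0] at hFF
  have hFw' : ∀ z : {y : V | y ≠ u}, Fw z.val =
      (if H.Reachable ⟨w, hwu⟩ z then H.dist ⟨w, hwu⟩ z else 0) +
      (if H.Reachable ⟨w, hwu⟩ z then 1 else T.dist u z.val) := by
    intro z
    rw [hFwsub z]
    split_ifs with hrz <;> omega
  have hFx' : ∀ z : {y : V | y ≠ u}, Fx z.val =
      (if H.Reachable ⟨w, hwu⟩ z then H.dist x z else 0) +
      (if H.Reachable ⟨w, hwu⟩ z then 1 else T.dist u z.val) := by
    intro z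
    rw [hFxsub z]
    split_ifs with hrz <;> omega
  rw [Finset.sum_congr rfl (fun z _ => hFw' z), Finset.sum_congr rfl (fun z _ => hFx' z),
    Finset.sum_add_distrib, Finset.sum_add_distrib] at hFF
  exact le_of_add_le_add_right hFF
end

section
/- Let T be a tree with 1-median x, let u be a new vertex not in T, and consider the Sum-version network G_T^u on vertex set V(T) ∪ {u} obtained from T by adding the edge {u,x} owned by u (edge ownership of the edges of T is arbitrary). Let y_1,…,y_l be the neighbors of x in T and let T_{y_i} be the maximal subtree of T rooted at y_i not containing x. If S_u* = {x_1,…,x_k} is a minimum-cost strategy of agent u among all strategies buying at least two edges (k ≥ 2), then there is no single subtree T_{y_i} containing all of the vertices x_1,…,x_k. -/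
open scoped Classical

/-- The graph `T` together with the edges from `u` to every vertex of `A`
(the network induced when agent `u` plays strategy `A` against the fixed graph `T`). -/
def addOwn {V : Type*} (T : SimpleGraph V) (u : V) (A : Finset V) : SimpleGraph V where
  Adj a b := a ≠ b ∧ (T.Adj a b ∨ (a = u ∧ b ∈ A) ∨ (b = u ∧ a ∈ A))
  symm := ⟨fun a b h => ⟨h.1.symm, by
    rcases h.2 with h' | h' | h'
    · exact Or.inl h'.symm
    · exact Or.inr (Or.inr h')
    · exact Or.inr (Or.inl h')⟩⟩
  loopless := ⟨fun a h => h.1 rfl⟩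

/-- Sum-version cost of agent `u` when playing strategy `A` against the fixed graph `T`. -/
noncomputable def uCost {V : Type*} [Fintype V] (α : ℝ) (T : SimpleGraph V) (u : V)
    (A : Finset V) : EReal :=
  if (addOwn T u A).Connected then
    ((α * A.card + ∑ w : V, ((addOwn T u A).dist u w : ℝ) : ℝ) : EReal)
  else ⊤


namespace NCGaux
open SimpleGraph

/-- A walk in `addOwn T u A` avoiding `u` is a walk in `T`. -/
lemma walk_to_T {V : Type*} (T : SimpleGraph V) (u : V) (A : Finset V)
    (hu : ∀ w, ¬ T.Adj u w) :
    ∀ {a b : V} (p : (addOwn T u A).Walk a b), (∀ w ∈ p.support, w ≠ u) →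
      ∃ q : T.Walk a b, q.length = p.length
  | _, _, .nil, _ => ⟨.nil, rfl⟩
  | a, b, .cons h p, hsup => by
    have ha : a ≠ u := hsup a (by simp)
    have hc : _ ≠ u := hsup _ (by
      rw [SimpleGraph.Walk.support_cons]
      exact List.mem_cons_of_mem _ p.start_mem_support)
    obtain ⟨q, hq⟩ := walk_to_T T u A hu p (fun w hw => hsup w (by
      rw [SimpleGraph.Walk.support_cons]; exact List.mem_cons_of_mem _ hw))
    rcases h.2 with h' | ⟨ha', -⟩ | ⟨hc', -⟩
    · exact ⟨.cons h' q, by simp [hq]⟩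
    · exact absurd ha' ha
    · exact absurd hc' hc

end NCGaux


namespace NCGaux
open SimpleGraph

variable {V : Type*}

/-- A walk ending at an isolated vertex must start there. -/
lemma walk_to_isolated {G : SimpleGraph V} {u : V}
    (hu : ∀ w, ¬ G.Adj u w) : ∀ {a : V}, G.Walk a u → a = u
  | _, .nil => rfl
  | _, .cons h q => absurd ((walk_to_isolated hu q) ▸ h) (fun h' => hu _ h'.symm)

/-- If `u` is isolated and a walk starts at `a ≠ u`, the walk avoids `u`. -/
lemma isolated_not_mem_support {G : SimpleGraph V} {u a b : V}
    (hu : ∀ w, ¬ G.Adj u w) (ha : a ≠ u) (p : G.Walk a b) :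
    ∀ w ∈ p.support, w ≠ u := by
  intro w hw hwu
  subst hwu
  obtain ⟨q, r, rfl⟩ := SimpleGraph.Walk.mem_support_iff_exists_append.mp hw
  exact ha (walk_to_isolated hu q)

/-- A walk whose support lies in `s` lifts to the induced subgraph, with
support projecting into the original support. -/
lemma exists_induce_walk {G : SimpleGraph V} {s : Set V} :
    ∀ {a b : V} (p : G.Walk a b) (hp : ∀ w ∈ p.support, w ∈ s),
    ∃ q : (G.induce s).Walk ⟨a, hp a p.start_mem_support⟩ ⟨b, hp b p.end_mem_support⟩,
      ∀ w ∈ q.support, (w : V) ∈ p.support := by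
  intro a b p
  induction p with
  | nil => exact fun hp => ⟨.nil, by simp⟩
  | @cons a c b h q ih =>
    intro hp
    have hq : ∀ w ∈ q.support, w ∈ s := fun w hw => hp w (by simp [hw])
    obtain ⟨q', hq'⟩ := ih hq
    refine ⟨.cons (by exact h) q', ?_⟩
    intro w hw
    change w ∈ _ :: q'.support at hw; rw [SimpleGraph.Walk.support_cons]
    rcases List.mem_cons.mp hw with hw | hw
    · subst hw; simp
    · exact List.mem_cons_of_mem _ (hq' w hw)

/-- Triangle inequality for graph distance, assuming reachability. -/
lemma dist_tri {G : SimpleGraph V} {a b c : V} (h1 : G.Reachable a b) (h2 : G.Reachable b c) :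
    G.dist a c ≤ G.dist a b + G.dist b c := by
  obtain ⟨p, hp⟩ := h1.exists_walk_length_eq_dist
  obtain ⟨q, hq⟩ := h2.exists_walk_length_eq_dist
  have := SimpleGraph.dist_le (p.append q)
  rwa [SimpleGraph.Walk.length_append, hp, hq] at this

/-- If every walk from `a` to `w` passes through `x`, the distance splits. -/
lemma dist_split (G : SimpleGraph V) (x : V) {a w : V}
    (hsep : ∀ p : G.Walk a w, x ∈ p.support)
    (hr : G.Reachable a w) : G.dist a x + G.dist x w ≤ G.dist a w := by
  obtain ⟨p, hp⟩ := hr.exists_walk_length_eq_dist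
  have hx := hsep p
  have hlen := congrArg SimpleGraph.Walk.length (p.take_spec hx)
  rw [SimpleGraph.Walk.length_append] at hlen
  have h1 := SimpleGraph.dist_le (p.takeUntil x hx)
  have h2 := SimpleGraph.dist_le (p.dropUntil x hx)
  omega

/-- Key lower bound for walks from `x` into the component `Comp` of `y` in `T - x`. -/
lemma median_walk_lower (T : SimpleGraph V) (x y : V) (Comp : V → Prop)
    (hcl : ∀ {c w : V}, Comp w → ∀ q : T.Walk c w, (∀ z ∈ q.support, z ≠ x) → Comp c)
    (huniq : ∀ c, T.Adj x c → Comp c → c = y)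
    {w : V} (hw : Comp w) (hwx : w ≠ x) :
    ∀ p : T.Walk x w, T.dist y w + 1 ≤ p.length := by
  suffices H : ∀ n (p : T.Walk x w), p.length = n → T.dist y w + 1 ≤ n by
    intro p; exact H _ p rfl
  intro n
  induction n using Nat.strong_induction_on with
  | _ n ih =>
    intro p hn
    cases p with
    | nil => exact absurd rfl hwx
    | @cons _ c _ h q =>
      rw [SimpleGraph.Walk.length_cons] at hn
      by_cases hxs : x ∈ q.support
      · have hle := SimpleGraph.Walk.length_dropUntil_le q hxs
        have := ih (q.dropUntil x hxs).length (by omega) (q.dropUntil x hxs) rfl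
        omega
      · have hsup : ∀ z ∈ q.support, z ≠ x := fun z hz hzx => hxs (hzx ▸ hz)
        have hcy : c = y := huniq c h (hcl hw q hsup)
        subst hcy
        have := SimpleGraph.dist_le q
        omega

/-- Lower bound on distances from `u` in `addOwn T u A`: any walk from `u` must first
use a bought edge. -/
lemma addOwn_walk_lower (T : SimpleGraph V) (u : V) (A : Finset V) (hA : A.Nonempty)
    (hu : ∀ w, ¬ T.Adj u w) {w : V} (hw : w ≠ u) :
    ∀ p : (addOwn T u A).Walk u w,
      1 + A.inf' hA (fun a => T.dist a w) ≤ p.length := by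
  suffices H : ∀ n (p : (addOwn T u A).Walk u w), p.length = n →
      1 + A.inf' hA (fun a => T.dist a w) ≤ n by
    intro p; exact H _ p rfl
  intro n
  induction n using Nat.strong_induction_on with
  | _ n ih =>
    intro p hn
    cases p with
    | nil => exact absurd rfl hw.symm
    | @cons _ c _ h q =>
      rw [SimpleGraph.Walk.length_cons] at hn
      have hcA : c ∈ A := by
        rcases h.2 with h' | ⟨-, hc⟩ | ⟨hc, -⟩
        · exact absurd h' (hu c)
        · exact hc
        · exact absurd hc.symm h.1
      by_cases hus : u ∈ q.support
      · have hle := SimpleGraph.Walk.length_dropUntil_le q hus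
        have := ih (q.dropUntil u hus).length (by omega) (q.dropUntil u hus) rfl
        omega
      · have hsup : ∀ z ∈ q.support, z ≠ u := fun z hz hzu => hus (hzu ▸ hz)
        obtain ⟨q₀, hq₀⟩ := walk_to_T T u A hu q hsup
        have h1 : T.dist c w ≤ q.length := hq₀ ▸ SimpleGraph.dist_le q₀
        have h2 := Finset.inf'_le (fun a => T.dist a w) hcA
        have h2' : A.inf' hA (fun a => T.dist a w) ≤ T.dist c w := h2
        omega

end NCGaux

/-- Let `T` be a tree (on the vertices other than `u`) with 1-median `x`,
and let `G_T^u` be obtained by adding the new vertex `u` with its edge `{u,x}`. If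
`Sstar` is a minimum-cost strategy of agent `u` among all strategies buying at least two
edges, then no single subtree `T_y` of `T` hanging off a neighbor `y` of `x` contains
all vertices of `Sstar`. -/
theorem best_multi_buy_hits_different_subtrees {V : Type*} [Fintype V] [DecidableEq V]
    (α : ℝ) (hα : 0 < α) (T : SimpleGraph V) (u : V)
    (hu_isolated : ∀ w : V, ¬ T.Adj u w)
    (htree : (T.induce {y : V | y ≠ u}).IsTree)
    (x : V) (hxu : x ≠ u)
    (hmed : ∀ y : V, y ≠ u → (∑ w : V, T.dist x w) ≤ ∑ w : V, T.dist y w)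
    (Sstar : Finset V) (hSu : u ∉ Sstar) (hScard : 2 ≤ Sstar.card)
    (hopt : ∀ A : Finset V, u ∉ A → 2 ≤ A.card → uCost α T u Sstar ≤ uCost α T u A) :
    ¬ ∃ y : V, T.Adj x y ∧ ∀ z ∈ Sstar, ∃ (hy : y ≠ x) (hz : z ≠ x),
        (T.induce {v : V | v ≠ x}).Reachable ⟨y, hy⟩ ⟨z, hz⟩ := by
  rintro ⟨y, hxy, hall⟩
  classical
  -- basic facts
  have hyu : y ≠ u := fun h => hu_isolated x (h ▸ hxy).symm
  have hreach : ∀ v w : V, v ≠ u → w ≠ u → T.Reachable v w := by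
    intro v w hv hw
    have h := htree.isConnected ⟨v, hv⟩ ⟨w, hw⟩
    exact h.map (SimpleGraph.Embedding.induce _).toHom
  have hSne : Sstar.Nonempty := Finset.card_pos.mp (by omega)
  obtain ⟨z₀, hz₀⟩ := hSne
  obtain ⟨hy, -, -⟩ := hall z₀ hz₀
  have hSne : Sstar.Nonempty := ⟨z₀, hz₀⟩
  set Tx := T.induce {v : V | v ≠ x} with hTxdef
  set Comp : V → Prop := fun w => ∃ hw : w ≠ x, Tx.Reachable ⟨y, hy⟩ ⟨w, hw⟩ with hCompdef
  have hCompS : ∀ z ∈ Sstar, Comp z := by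
    intro z hz; obtain ⟨hy', hz', hr⟩ := hall z hz; exact ⟨hz', hr⟩
  have hCompx : ¬ Comp x := fun h => h.1 rfl
  have hTxiso : ∀ (hux : u ≠ x) (w : {v : V // v ≠ x}), ¬ Tx.Adj ⟨u, hux⟩ w :=
    fun hux w h => hu_isolated w.1 h
  have hCompu : ¬ Comp u := by
    rintro ⟨hux, hr⟩
    obtain ⟨p⟩ := hr
    have h := NCGaux.walk_to_isolated (hTxiso hux) p
    exact hyu (congrArg Subtype.val h)
  have hCompne_u : ∀ {w : V}, Comp w → w ≠ u := fun {w} hw hwu => hCompu (hwu ▸ hw)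
  -- closure of Comp under walks avoiding x
  have hclose : ∀ {c w : V}, Comp w → ∀ q : T.Walk c w, (∀ z ∈ q.support, z ≠ x) → Comp c := by
    intro c w hw q hq
    obtain ⟨hwx, hr⟩ := hw
    have hcx : c ≠ x := hq c q.start_mem_support
    obtain ⟨q', -⟩ := NCGaux.exists_induce_walk (s := {v : V | v ≠ x}) q hq
    exact ⟨hcx, hr.trans q'.reachable.symm⟩
  -- from Comp w, a T-walk from y to w avoiding x
  have hCompWalk : ∀ {w : V}, Comp w → ∃ q : T.Walk y w, ∀ z ∈ q.support, z ≠ x := by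
    rintro w ⟨hwx, hr⟩
    obtain ⟨p⟩ := hr
    refine ⟨p.map (SimpleGraph.Embedding.induce _).toHom, ?_⟩
    intro z hz
    replace hz : z ∈ (p.map (SimpleGraph.Embedding.induce {v : V | v ≠ x}).toHom).support := hz
    rw [SimpleGraph.Walk.support_map] at hz
    obtain ⟨z', hz', rfl⟩ := List.mem_map.mp hz
    exact z'.2
  -- x has a unique neighbour in Comp, namely y
  have huniq : ∀ c, T.Adj x c → Comp c → c = y := by
    intro c hxc hc
    by_contra hne
    have hcu : c ≠ u := fun h => hu_isolated x (h ▸ hxc).symm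
    obtain ⟨q, hq⟩ := hCompWalk hc
    have hq_u : ∀ z ∈ q.support, z ≠ u :=
      NCGaux.isolated_not_mem_support hu_isolated hyu q
    obtain ⟨q', hq'⟩ := NCGaux.exists_induce_walk (s := {v : V | v ≠ u}) q hq_u
    have hxq' : (⟨x, hxu⟩ : {v : V // v ≠ u}) ∉ q'.toPath.1.support := by
      intro hmem
      have h1 := SimpleGraph.Walk.support_bypass_subset _ hmem
      exact (hq x (hq' _ h1)) rfl
    have hyx' : (T.induce {v : V | v ≠ u}).Adj ⟨y, hyu⟩ ⟨x, hxu⟩ := hxy.symm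
    have hxc' : (T.induce {v : V | v ≠ u}).Adj ⟨x, hxu⟩ ⟨c, hcu⟩ := hxc
    have hp1 : (SimpleGraph.Walk.cons hyx' (SimpleGraph.Walk.cons hxc' .nil)).IsPath := by
      rw [SimpleGraph.Walk.isPath_def]
      simp only [SimpleGraph.Walk.support_cons, SimpleGraph.Walk.support_nil]
      refine List.nodup_cons.mpr ⟨?_, List.nodup_cons.mpr ⟨?_, List.nodup_cons.mpr (by simp)⟩⟩
      · simp only [List.mem_cons, List.mem_singleton, List.not_mem_nil, or_false]
        push_neg
        exact ⟨fun h => hy (congrArg Subtype.val h), fun h => hne ((congrArg Subtype.val h).symm)⟩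
      · simp only [List.mem_cons, List.not_mem_nil, or_false, List.mem_singleton]
        exact fun h => hxc.ne (congrArg Subtype.val h)
    have hpe := SimpleGraph.isAcyclic_iff_path_unique.mp htree.IsAcyclic
      ⟨_, hp1⟩ q'.toPath
    have hxmem : (⟨x, hxu⟩ : {v : V // v ≠ u}) ∈
        (SimpleGraph.Walk.cons hyx' (SimpleGraph.Walk.cons hxc' .nil)).support := by
      simp [SimpleGraph.Walk.support_cons]
    rw [← hpe] at hxq'
    exact hxq' hxmem
  -- distance facts in T
  have hmedY : ∀ w, Comp w → T.dist y w + 1 ≤ T.dist x w := by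
    intro w hw
    obtain ⟨p, hp⟩ := (hreach x w hxu (hCompne_u hw)).exists_walk_length_eq_dist
    have := NCGaux.median_walk_lower T x y Comp (fun hw q hq => hclose hw q hq)
      huniq hw hw.1 p
    omega
  have hsepa : ∀ a w, Comp a → ¬ Comp w → w ≠ u → w ≠ x →
      T.dist a x + T.dist x w ≤ T.dist a w := by
    intro a w ha hw hwu hwx
    refine NCGaux.dist_split T x ?_ (hreach a w (hCompne_u ha) hwu)
    intro p
    by_contra hxp
    have hsup : ∀ z ∈ p.reverse.support, z ≠ x := by
      intro z hz hzx
      rw [SimpleGraph.Walk.support_reverse, List.mem_reverse] at hz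
      exact hxp (hzx ▸ hz)
    exact hw (hclose ha p.reverse hsup)
  have hRbound : ∀ w, w ≠ u → T.dist y w ≤ 1 + T.dist x w := by
    intro w hwu
    obtain ⟨p, hp⟩ := (hreach x w hxu hwu).exists_walk_length_eq_dist
    have := SimpleGraph.dist_le (SimpleGraph.Walk.cons hxy.symm p)
    rw [SimpleGraph.Walk.length_cons, hp] at this
    omega
  have hdu : ∀ v : V, T.dist v u = 0 := by
    intro v
    by_cases hv : v = u
    · subst hv; exact SimpleGraph.dist_self
    · rw [SimpleGraph.dist_eq_zero_iff_eq_or_not_reachable]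
      refine Or.inr fun hr => hv ?_
      obtain ⟨p⟩ := hr
      exact NCGaux.walk_to_isolated hu_isolated p
  -- the two sides of the split
  set CompF : Finset V := Finset.univ.filter Comp with hCompFdef
  set RF : Finset V := (Finset.univ.filter fun w => ¬ Comp w).erase u with hRFdef
  have humem : u ∈ Finset.univ.filter fun w => ¬ Comp w :=
    Finset.mem_filter.mpr ⟨Finset.mem_univ u, hCompu⟩
  have hsplit : ∀ h : V → ℕ,
      ∑ w, h w = (∑ w ∈ CompF, h w) + (h u + ∑ w ∈ RF, h w) := by
    intro h
    rw [← Finset.sum_filter_add_sum_filter_not Finset.univ Comp h,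
      ← Finset.add_sum_erase _ h humem]
  have hmemCompF : ∀ {w}, w ∈ CompF ↔ Comp w := by
    intro w
    simp [hCompFdef, Finset.mem_filter]
  have hmemRF : ∀ {w}, w ∈ RF ↔ (w ≠ u ∧ ¬ Comp w) := by
    intro w
    simp only [hRFdef, Finset.mem_erase, Finset.mem_filter, Finset.mem_univ, true_and]
  -- median counting: |CompF| ≤ |RF|
  have hcardCR : CompF.card ≤ RF.card := by
    have h1 := hmed y hyu
    have h2 : (∑ w ∈ CompF, T.dist y w) + CompF.card ≤ ∑ w ∈ CompF, T.dist x w := by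
      rw [Finset.card_eq_sum_ones, ← Finset.sum_add_distrib]
      exact Finset.sum_le_sum fun w hw => hmedY w (hmemCompF.mp hw)
    have h3 : ∑ w ∈ RF, T.dist y w ≤ (∑ w ∈ RF, T.dist x w) + RF.card := by
      rw [Finset.card_eq_sum_ones, ← Finset.sum_add_distrib]
      refine Finset.sum_le_sum fun w hw => ?_
      have := hRbound w (hmemRF.mp hw).1
      omega
    have e1 := hsplit (fun w => T.dist x w)
    have e2 := hsplit (fun w => T.dist y w)
    have d1 : T.dist x u = 0 := hdu x
    have d2 : T.dist y u = 0 := hdu y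
    omega
  -- the swap strategy
  obtain ⟨astar, hastar, hminf⟩ := Finset.exists_mem_eq_inf' hSne (fun a => T.dist a x)
  set m := Sstar.inf' hSne (fun a => T.dist a x) with hmdef
  have hCompa : Comp astar := hCompS astar hastar
  have hau : astar ≠ u := hCompne_u hCompa
  have hm1 : 1 ≤ m := by
    rw [hminf]
    exact (hreach astar x hau hxu).pos_dist_of_ne hCompa.1
  set A' := Sstar.erase astar with hA'def
  set B := insert x A' with hBdef
  have hxA' : x ∉ A' := fun h => hCompx (hCompS x (Finset.mem_of_mem_erase h))
  have hxS : x ∉ Sstar := fun h => hCompx (hCompS x h)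
  have hcardA' : A'.card + 1 = Sstar.card := by
    rw [hA'def, Finset.card_erase_of_mem hastar]
    omega
  have hcardB : B.card = Sstar.card := by
    rw [hBdef, Finset.card_insert_of_notMem hxA']
    omega
  have hBu : u ∉ B := by
    rw [hBdef]
    simp only [Finset.mem_insert, not_or]
    exact ⟨fun h => hxu h.symm, fun h => hSu (Finset.mem_of_mem_erase h)⟩
  have hSstar_ne_u : ∀ a ∈ Sstar, a ≠ u := fun a ha => hCompne_u (hCompS a ha)
  have hB_ne_u : ∀ a ∈ B, a ≠ u := by
    intro a ha
    rcases Finset.mem_insert.mp ha with rfl | h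
    · exact hxu
    · exact hSstar_ne_u a (Finset.mem_of_mem_erase h)
  -- connectivity of the two networks
  have haddOwn_le : ∀ C : Finset V, T ≤ addOwn T u C := by
    intro C a b h
    exact ⟨h.ne, Or.inl h⟩
  have hconn : ∀ C : Finset V, C.Nonempty → (∀ a ∈ C, a ≠ u) →
      (addOwn T u C).Connected := by
    intro C hC hCu
    obtain ⟨a, ha⟩ := hC
    have hau' := hCu a ha
    rw [SimpleGraph.connected_iff_exists_forall_reachable]
    refine ⟨u, fun v => ?_⟩
    by_cases hv : v = u
    · subst hv; exact SimpleGraph.Reachable.refl _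
    · have h1 : (addOwn T u C).Adj u a := ⟨fun e => hau' e.symm, Or.inr (Or.inl ⟨rfl, ha⟩)⟩
      exact h1.reachable.trans ((hreach a v hau' hv).mono (haddOwn_le C))
  have hconnA := hconn Sstar hSne hSstar_ne_u
  have hconnB := hconn B ⟨x, Finset.mem_insert_self x A'⟩ hB_ne_u
  -- distance bounds in the networks
  have hdistle : ∀ (C : Finset V) (b w : V), b ∈ C → b ≠ u → w ≠ u →
      (addOwn T u C).dist u w ≤ 1 + T.dist b w := by
    intro C b w hb hbu hwu
    obtain ⟨p, hp⟩ := (hreach b w hbu hwu).exists_walk_length_eq_dist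
    have hadj : (addOwn T u C).Adj u b := ⟨fun e => hbu e.symm, Or.inr (Or.inl ⟨rfl, hb⟩)⟩
    have := SimpleGraph.dist_le (SimpleGraph.Walk.cons hadj (p.mapLe (haddOwn_le C)))
    rw [SimpleGraph.Walk.length_cons, SimpleGraph.Walk.length_map, hp] at this
    omega
  set fN : V → ℕ := fun w => (addOwn T u Sstar).dist u w with hfNdef
  set gN : V → ℕ := fun w => (addOwn T u B).dist u w with hgNdef
  have hflow : ∀ w, w ≠ u →
      1 + Sstar.inf' hSne (fun a => T.dist a w) ≤ fN w := by
    intro w hwu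
    obtain ⟨p, hp⟩ := (hconnA u w).exists_walk_length_eq_dist
    have h2 := NCGaux.addOwn_walk_lower T u Sstar hSne hu_isolated hwu p
    show 1 + _ ≤ (addOwn T u Sstar).dist u w
    omega
  -- pointwise comparisons
  have hP_RF : ∀ w ∈ RF, gN w + m ≤ fN w := by
    intro w hw
    obtain ⟨hwu, hwc⟩ := hmemRF.mp hw
    have hg : gN w ≤ 1 + T.dist x w :=
      hdistle B x w (Finset.mem_insert_self x A') hxu hwu
    have hf : 1 + (m + T.dist x w) ≤ fN w := by
      refine le_trans (by
        have : m + T.dist x w ≤ Sstar.inf' hSne (fun a => T.dist a w) := by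
          refine Finset.le_inf' hSne _ fun a ha => ?_
          have hma : m ≤ T.dist a x := Finset.inf'_le _ ha
          by_cases hwx : w = x
          · subst hwx
            simp only [SimpleGraph.dist_self]
            omega
          · have := hsepa a w (hCompS a ha) hwc hwu hwx
            omega
        omega) (hflow w hwu)
    omega
  have hP_C : ∀ w ∈ CompF \ A', gN w ≤ fN w + m := by
    intro w hw
    have hwC : Comp w := hmemCompF.mp (Finset.mem_sdiff.mp hw).1
    have hwu : w ≠ u := hCompne_u hwC
    obtain ⟨a₀, ha₀, he⟩ := Finset.exists_mem_eq_inf' hSne (fun a => T.dist a w)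
    have hf := hflow w hwu
    rw [he] at hf
    by_cases ha : a₀ = astar
    · subst ha
      have hg : gN w ≤ 1 + T.dist x w :=
        hdistle B x w (Finset.mem_insert_self x A') hxu hwu
      have htri : T.dist x w ≤ T.dist x a₀ + T.dist a₀ w :=
        NCGaux.dist_tri (hreach x a₀ hxu hau) (hreach a₀ w hau hwu)
      have hxa : T.dist x a₀ = m := by
        rw [SimpleGraph.dist_comm, ← hminf]
      omega
    · have ha₀B : a₀ ∈ B := Finset.mem_insert_of_mem (Finset.mem_erase.mpr ⟨ha, ha₀⟩)
      have hg : gN w ≤ 1 + T.dist a₀ w :=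
        hdistle B a₀ w ha₀B (hSstar_ne_u a₀ ha₀) hwu
      omega
  have hP_A' : ∀ w ∈ A', gN w ≤ fN w := by
    intro w hw
    have hwS := Finset.mem_of_mem_erase hw
    have hwu : w ≠ u := hSstar_ne_u w hwS
    have hg : gN w ≤ 1 + T.dist w w :=
      hdistle B w w (Finset.mem_insert_of_mem hw) hwu hwu
    rw [SimpleGraph.dist_self] at hg
    have hf := hflow w hwu
    omega
  have hP_u : gN u = 0 ∧ fN u = 0 := ⟨SimpleGraph.dist_self, SimpleGraph.dist_self⟩
  -- summation
  have hA'sub : A' ⊆ CompF := fun a ha =>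
    hmemCompF.mpr (hCompS a (Finset.mem_of_mem_erase ha))
  have hs1 : (∑ w ∈ RF, gN w) + m * RF.card ≤ ∑ w ∈ RF, fN w := by
    rw [Finset.card_eq_sum_ones, Finset.mul_sum, ← Finset.sum_add_distrib]
    refine Finset.sum_le_sum fun w hw => ?_
    have := hP_RF w hw
    omega
  have hs2 : (∑ w ∈ CompF \ A', gN w) ≤ (∑ w ∈ CompF \ A', fN w) + m * (CompF \ A').card := by
    rw [Finset.card_eq_sum_ones, Finset.mul_sum, ← Finset.sum_add_distrib]
    refine Finset.sum_le_sum fun w hw => ?_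
    have := hP_C w hw
    omega
  have hs3 : (∑ w ∈ A', gN w) ≤ ∑ w ∈ A', fN w := Finset.sum_le_sum hP_A'
  have hsf : (∑ w ∈ CompF \ A', fN w) + ∑ w ∈ A', fN w = ∑ w ∈ CompF, fN w :=
    Finset.sum_sdiff hA'sub
  have hsg : (∑ w ∈ CompF \ A', gN w) + ∑ w ∈ A', gN w = ∑ w ∈ CompF, gN w :=
    Finset.sum_sdiff hA'sub
  have hcsd : (CompF \ A').card + A'.card = CompF.card :=
    Finset.card_sdiff_add_card_eq_card hA'sub
  have hA'pos : 1 ≤ A'.card := by omega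
  have hmul : m * (CompF \ A').card + m ≤ m * RF.card := by
    have h1 : (CompF \ A').card + 1 ≤ RF.card := by omega
    calc m * (CompF \ A').card + m = m * ((CompF \ A').card + 1) := by ring
    _ ≤ m * RF.card := Nat.mul_le_mul_left m h1
  have hef := hsplit fN
  have heg := hsplit gN
  have hmain : (∑ w, gN w) + 1 ≤ ∑ w, fN w := by
    have hgu := hP_u.1
    have hfu := hP_u.2
    omega
  -- contradiction with optimality
  have hBcard2 : 2 ≤ B.card := by omega
  have hle := hopt B hBu hBcard2
  rw [uCost, if_pos hconnA, uCost, if_pos hconnB, EReal.coe_le_coe_iff] at hle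
  have hfsum : ∑ w : V, ((addOwn T u Sstar).dist u w : ℝ) = ((∑ w, fN w : ℕ) : ℝ) := by
    rw [Nat.cast_sum]
  have hgsum : ∑ w : V, ((addOwn T u B).dist u w : ℝ) = ((∑ w, gN w : ℕ) : ℝ) := by
    rw [Nat.cast_sum]
  rw [hfsum, hgsum, hcardB] at hle
  have : ((∑ w, fN w : ℕ) : ℝ) ≤ ((∑ w, gN w : ℕ) : ℝ) := by linarith
  rw [Nat.cast_le] at this
  omega
end

section
/- Let T be a tree with 1-median x, let u be a new vertex not in T, and consider the Sum-version network G_T^u on vertex set V(T) ∪ {u} obtained from T by adding the edge {u,x} owned by u. Let S_u^1 be a minimum-cost strategy of u among strategies buying at least two edges one of which goes to x, and let S_u^2 be a minimum-cost strategy of u among strategies buying at least two edges none of which goes to x. Let x_j ∈ S_u^2 be a vertex of minimum distance to x among the vertices of S_u^2. If S_u^2 yields strictly smaller cost for u than S_u^1, then x_j is not a leaf of G_T^u. -/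
open scoped Classical

section Aux

variable {V : Type*} {T : SimpleGraph V} {u : V}

lemma le_addOwn (T : SimpleGraph V) (u : V) (A : Finset V) : T ≤ addOwn T u A :=
  fun _ _ h => ⟨h.ne, Or.inl h⟩

lemma addOwn_adj_of_mem {A : Finset V} {s : V} (hs : s ∈ A) (hsu : s ≠ u) :
    (addOwn T u A).Adj u s :=
  ⟨hsu.symm, Or.inr (Or.inl ⟨rfl, hs⟩)⟩

lemma mem_of_addOwn_adj (hiso : ∀ w : V, ¬ T.Adj u w) {A : Finset V} {z : V}
    (h : (addOwn T u A).Adj u z) : z ∈ A := by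
  rcases h with ⟨hne, h | h | h⟩
  · exact absurd h (hiso z)
  · exact h.2
  · exact absurd h.1.symm hne

/-- A walk in `addOwn T u A` avoiding `u` comes from a walk in `T`. -/
lemma walk_drop {A : Finset V} :
    ∀ {a b : V} (q : (addOwn T u A).Walk a b), u ∉ q.support →
      ∃ q' : T.Walk a b, q'.length = q.length := by
  intro a b q
  induction q with
  | nil => exact fun _ => ⟨SimpleGraph.Walk.nil, rfl⟩
  | @cons a c b h p ih =>
    intro hu
    rw [SimpleGraph.Walk.support_cons, List.mem_cons] at hu
    push_neg at hu
    obtain ⟨q', hq'⟩ := ih hu.2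
    have hau : a ≠ u := fun hh => hu.1 hh.symm
    have hcu : c ≠ u := by
      intro hh
      exact hu.2 (hh ▸ p.start_mem_support)
    have hT : T.Adj a c := by
      rcases h with ⟨hne, h | h | h⟩
      · exact h
      · exact absurd h.1 hau
      · exact absurd h.1 hcu
    exact ⟨SimpleGraph.Walk.cons hT q', by simp [hq']⟩

lemma treach (htree : (T.induce {y : V | y ≠ u}).IsTree) {a b : V}
    (ha : a ≠ u) (hb : b ≠ u) : T.Reachable a b := by
  have h := htree.isConnected.preconnected ⟨a, ha⟩ ⟨b, hb⟩
  exact SimpleGraph.Reachable.map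
    (⟨Subtype.val, fun {p q} hpq => hpq⟩ : (T.induce {y : V | y ≠ u}) →g T) h

lemma addOwn_connected (htree : (T.induce {y : V | y ≠ u}).IsTree)
    {A : Finset V} (hA : A.Nonempty) (hAu : u ∉ A) : (addOwn T u A).Connected := by
  obtain ⟨s, hs⟩ := hA
  have hsu : s ≠ u := fun h => hAu (h ▸ hs)
  have hreach : ∀ w : V, (addOwn T u A).Reachable u w := by
    intro w
    by_cases hw : w = u
    · subst hw; exact SimpleGraph.Reachable.refl w
    · exact (addOwn_adj_of_mem hs hsu).reachable.trans
        ((treach htree hsu hw).mono (le_addOwn T u A))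
  haveI : Nonempty V := ⟨u⟩
  exact ⟨fun a b => (hreach a).symm.trans (hreach b)⟩

/-- Upper bound: buying `s` gives `d(u,w) ≤ 1 + d_T(s,w)`. -/
lemma addOwn_dist_ub (htree : (T.induce {y : V | y ≠ u}).IsTree)
    {A : Finset V} {s w : V} (hs : s ∈ A) (hsu : s ≠ u) (hw : w ≠ u) :
    (addOwn T u A).dist u w ≤ 1 + T.dist s w := by
  obtain ⟨p, hlen⟩ := (treach htree hsu hw).exists_walk_length_eq_dist
  have : (addOwn T u A).dist u w ≤
      (SimpleGraph.Walk.cons (addOwn_adj_of_mem hs hsu)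
        (p.map (SimpleGraph.Hom.ofLE (le_addOwn T u A)))).length :=
    SimpleGraph.dist_le _
  simpa [SimpleGraph.Walk.length_map, hlen, Nat.add_comm] using this

/-- Lower bound: a shortest `u`–`w` path starts with an edge to some `z ∈ A`
followed by a walk in `T`. -/
lemma addOwn_dist_lb (hiso : ∀ w : V, ¬ T.Adj u w)
    (htree : (T.induce {y : V | y ≠ u}).IsTree)
    {A : Finset V} (hA : A.Nonempty) (hAu : u ∉ A) {w : V} (hw : w ≠ u) :
    ∃ z ∈ A, ∃ q : T.Walk z w, q.length + 1 = (addOwn T u A).dist u w := by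
  obtain ⟨p, hp, hlen⟩ :=
    ((addOwn_connected htree hA hAu).preconnected u w).exists_path_of_dist
  cases p with
  | nil => exact absurd rfl hw
  | @cons _ z _ h q =>
    have hz : z ∈ A := mem_of_addOwn_adj hiso h
    rw [SimpleGraph.Walk.cons_isPath_iff] at hp
    obtain ⟨q', hq'⟩ := walk_drop q hp.2
    refine ⟨z, hz, q', ?_⟩
    rw [SimpleGraph.Walk.length_cons] at hlen
    omega

end Aux

/-- Setup as in Statement 5. `S1` is a minimum-cost strategy of `u` among
strategies buying at least two edges, one of which goes to `x`; `S2` is a minimum-cost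
strategy among those buying at least two edges, none going to `x`. If `S2` is strictly
cheaper than `S1`, then a vertex `xj ∈ S2` of minimum distance to `x` is not a leaf of
`G_T^u` (the graph `T` plus the edge `{u,x}`). -/
theorem closest_vertex_of_S2_not_leaf {V : Type*} [Fintype V] [DecidableEq V]
    (α : ℝ) (hα : 0 < α) (T : SimpleGraph V) (u : V)
    (hu_isolated : ∀ w : V, ¬ T.Adj u w)
    (htree : (T.induce {y : V | y ≠ u}).IsTree)
    (x : V) (hxu : x ≠ u)
    (hmed : ∀ y : V, y ≠ u → (∑ w : V, T.dist x w) ≤ ∑ w : V, T.dist y w)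
    (S1 : Finset V) (hS1u : u ∉ S1) (hS1x : x ∈ S1) (hS1c : 2 ≤ S1.card)
    (hS1opt : ∀ A : Finset V, u ∉ A → x ∈ A → 2 ≤ A.card →
      uCost α T u S1 ≤ uCost α T u A)
    (S2 : Finset V) (hS2u : u ∉ S2) (hS2x : x ∉ S2) (hS2c : 2 ≤ S2.card)
    (hS2opt : ∀ A : Finset V, u ∉ A → x ∉ A → 2 ≤ A.card →
      uCost α T u S2 ≤ uCost α T u A)
    (xj : V) (hj : xj ∈ S2) (hjmin : ∀ z ∈ S2, T.dist xj x ≤ T.dist z x)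
    (hlt : uCost α T u S2 < uCost α T u S1) :
    ¬ ∃! w : V, (addOwn T u {x}).Adj xj w := by
  rintro ⟨w0, hw0adj, huniq⟩
  have hxj_u : xj ≠ u := fun h => hS2u (h ▸ hj)
  have hxj_x : xj ≠ x := fun h => hS2x (h ▸ hj)
  have hTadj : T.Adj xj w0 := by
    rcases hw0adj with ⟨hne, h | h | h⟩
    · exact h
    · exact absurd h.1 hxj_u
    · exact absurd (Finset.mem_singleton.mp h.2) hxj_x
  have hU : ∀ y, T.Adj xj y → y = w0 := fun y hy => huniq y ⟨hy.ne, Or.inl hy⟩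
  have hw0u : w0 ≠ u := fun h => hu_isolated xj (h ▸ hTadj).symm
  have hw0xj : w0 ≠ xj := hTadj.ne.symm
  -- the leaf inequality: `d(w0,x) + 1 ≤ d(xj,x)`
  have hleafge : T.dist w0 x + 1 ≤ T.dist xj x := by
    obtain ⟨p, hlen⟩ := (treach htree hxj_u hxu).exists_walk_length_eq_dist
    cases p with
    | nil => exact absurd rfl hxj_x
    | @cons _ y _ h q =>
      have hy : y = w0 := hU y h
      have h2 : T.dist w0 x ≤ q.length := hy ▸ SimpleGraph.dist_le q
      rw [SimpleGraph.Walk.length_cons] at hlen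
      omega
  have hw0S2 : w0 ∉ S2 := fun hmem => by
    have h1 := hjmin w0 hmem
    omega
  -- the swapped strategy
  set S' : Finset V := insert w0 (S2.erase xj) with hS'def
  have hw0notE : w0 ∉ S2.erase xj := fun h => hw0S2 (Finset.mem_of_mem_erase h)
  have hS'card : S'.card = S2.card := by
    rw [hS'def, Finset.card_insert_of_notMem hw0notE, Finset.card_erase_of_mem hj]
    omega
  have hS'u : u ∉ S' := by
    intro h
    rcases Finset.mem_insert.mp h with h | h
    · exact hw0u h.symm
    · exact hS2u (Finset.mem_of_mem_erase h)
  have hS'ne : S'.Nonempty := ⟨w0, Finset.mem_insert_self _ _⟩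
  have hS2ne : S2.Nonempty := ⟨xj, hj⟩
  have hw0S' : w0 ∈ S' := Finset.mem_insert_self _ _
  have hGc : (addOwn T u S2).Connected := addOwn_connected htree hS2ne hS2u
  have hG'c : (addOwn T u S').Connected := addOwn_connected htree hS'ne hS'u
  -- pointwise comparison away from xj
  have hGEN : ∀ w : V, w ≠ xj →
      (addOwn T u S').dist u w ≤ (addOwn T u S2).dist u w := by
    intro w hwj
    by_cases hwu : w = u
    · subst hwu; simp [SimpleGraph.dist_self]
    · obtain ⟨z, hz, q, hq⟩ := addOwn_dist_lb hu_isolated htree hS2ne hS2u hwu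
      by_cases hzj : z = xj
      · subst hzj
        cases q with
        | nil => exact absurd rfl hwj
        | @cons _ y _ h r =>
          have hy : y = w0 := hU y h
          have h1 : (addOwn T u S').dist u w ≤ 1 + T.dist w0 w :=
            addOwn_dist_ub htree hw0S' hw0u hwu
          have h2 : T.dist w0 w ≤ r.length := hy ▸ SimpleGraph.dist_le r
          rw [SimpleGraph.Walk.length_cons] at hq
          omega
      · have hz' : z ∈ S' := Finset.mem_insert_of_mem (Finset.mem_erase.mpr ⟨hzj, hz⟩)
        have hzu : z ≠ u := fun h => hS2u (h ▸ hz)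
        have h1 : (addOwn T u S').dist u w ≤ 1 + T.dist z w :=
          addOwn_dist_ub htree hz' hzu hwu
        have h2 : T.dist z w ≤ q.length := SimpleGraph.dist_le q
        omega
  -- at xj we lose at most 1
  have hE1 : (addOwn T u S').dist u xj ≤ (addOwn T u S2).dist u xj + 1 := by
    have hadj1 : (addOwn T u S').Adj u w0 := addOwn_adj_of_mem hw0S' hw0u
    have hadj2 : (addOwn T u S').Adj w0 xj := ⟨hw0xj, Or.inl hTadj.symm⟩
    have h2 : (addOwn T u S').dist u xj ≤ 2 := by
      have := SimpleGraph.dist_le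
        ((SimpleGraph.Walk.cons hadj1 (SimpleGraph.Walk.cons hadj2 SimpleGraph.Walk.nil)) :
          (addOwn T u S').Walk u xj)
      simpa using this
    have h1 : 0 < (addOwn T u S2).dist u xj :=
      hGc.pos_dist_of_ne (fun h => hxj_u h.symm)
    omega
  -- at w0 we gain at least 1
  have hE2 : (addOwn T u S').dist u w0 + 1 ≤ (addOwn T u S2).dist u w0 := by
    have h1 : (addOwn T u S').dist u w0 ≤ 1 := by
      have := SimpleGraph.dist_le
        ((SimpleGraph.Walk.cons (addOwn_adj_of_mem hw0S' hw0u) SimpleGraph.Walk.nil) :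
          (addOwn T u S').Walk u w0)
      simpa using this
    have h0 : 0 < (addOwn T u S2).dist u w0 :=
      hGc.pos_dist_of_ne (fun h => hw0u h.symm)
    have hne1 : (addOwn T u S2).dist u w0 ≠ 1 := by
      intro h
      rcases SimpleGraph.dist_eq_one_iff_adj.mp h with ⟨hne, h' | h' | h'⟩
      · exact hu_isolated w0 h'
      · exact hw0S2 h'.2
      · exact hw0u h'.1
    omega
  -- sum splitting helpers
  have hsplit1 : ∀ F : V → ℕ,
      ∑ w : V, F w = F xj + ∑ w ∈ Finset.univ.erase xj, F w :=
    fun F => (Finset.add_sum_erase _ F (Finset.mem_univ xj)).symm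
  have hsplit2 : ∀ F : V → ℕ,
      ∑ w ∈ Finset.univ.erase xj, F w
        = F w0 + ∑ w ∈ (Finset.univ.erase xj).erase w0, F w :=
    fun F => (Finset.add_sum_erase _ F
      (Finset.mem_erase.mpr ⟨hw0xj, Finset.mem_univ w0⟩)).symm
  -- unfold the two costs
  have hcost2 : uCost α T u S2 =
      ((α * S2.card + ∑ w : V, ((addOwn T u S2).dist u w : ℝ) : ℝ) : EReal) := by
    simp only [uCost, if_pos hGc]
  have hcost' : uCost α T u S' =
      ((α * S'.card + ∑ w : V, ((addOwn T u S').dist u w : ℝ) : ℝ) : EReal) := by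
    simp only [uCost, if_pos hG'c]
  by_cases hcase : w0 = x
  · -- `S'` contains `x`: compare with `S1`
    have hSig : ∑ w : V, (addOwn T u S').dist u w ≤ ∑ w : V, (addOwn T u S2).dist u w := by
      have hrest : ∑ w ∈ (Finset.univ.erase xj).erase w0, (addOwn T u S').dist u w
          ≤ ∑ w ∈ (Finset.univ.erase xj).erase w0, (addOwn T u S2).dist u w :=
        Finset.sum_le_sum fun w hw =>
          hGEN w (Finset.mem_erase.mp (Finset.mem_of_mem_erase hw)).1
      have e11 := hsplit1 (fun w => (addOwn T u S').dist u w)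
      have e12 := hsplit2 (fun w => (addOwn T u S').dist u w)
      have e21 := hsplit1 (fun w => (addOwn T u S2).dist u w)
      have e22 := hsplit2 (fun w => (addOwn T u S2).dist u w)
      omega
    have hxS' : x ∈ S' := hcase ▸ hw0S'
    have hle1 : uCost α T u S1 ≤ uCost α T u S' :=
      hS1opt S' hS'u hxS' (by rw [hS'card]; exact hS2c)
    have hle2 : uCost α T u S' ≤ uCost α T u S2 := by
      rw [hcost', hcost2]
      refine EReal.coe_le_coe_iff.mpr ?_
      rw [hS'card]
      have hc : (∑ w : V, ((addOwn T u S').dist u w : ℝ))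
          ≤ ∑ w : V, ((addOwn T u S2).dist u w : ℝ) := by exact_mod_cast hSig
      linarith
    exact (LT.lt.not_ge hlt) (hle1.trans hle2)
  · -- `S'` avoids `x`: strict improvement over `S2`
    have hxnw0 : x ≠ w0 := fun h => hcase h.symm
    have hE3 : (addOwn T u S').dist u x + 1 ≤ (addOwn T u S2).dist u x := by
      obtain ⟨z, hz, q, hq⟩ := addOwn_dist_lb hu_isolated htree hS2ne hS2u hxu
      have h1 : T.dist z x ≤ q.length := SimpleGraph.dist_le q
      have h2 : T.dist xj x ≤ T.dist z x := hjmin z hz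
      have h4 : (addOwn T u S').dist u x ≤ 1 + T.dist w0 x :=
        addOwn_dist_ub htree hw0S' hw0u hxu
      omega
    have hSig : ∑ w : V, (addOwn T u S').dist u w + 1
        ≤ ∑ w : V, (addOwn T u S2).dist u w := by
      have hxmem : x ∈ (Finset.univ.erase xj).erase w0 :=
        Finset.mem_erase.mpr ⟨hxnw0, Finset.mem_erase.mpr ⟨fun h => hxj_x h.symm,
          Finset.mem_univ x⟩⟩
      have hsplit3 : ∀ F : V → ℕ,
          ∑ w ∈ (Finset.univ.erase xj).erase w0, F w
            = F x + ∑ w ∈ ((Finset.univ.erase xj).erase w0).erase x, F w :=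
        fun F => (Finset.add_sum_erase _ F hxmem).symm
      have hrest : ∑ w ∈ ((Finset.univ.erase xj).erase w0).erase x,
            (addOwn T u S').dist u w
          ≤ ∑ w ∈ ((Finset.univ.erase xj).erase w0).erase x,
            (addOwn T u S2).dist u w :=
        Finset.sum_le_sum fun w hw =>
          hGEN w (Finset.mem_erase.mp (Finset.mem_of_mem_erase
            (Finset.mem_of_mem_erase hw))).1
      have e11 := hsplit1 (fun w => (addOwn T u S').dist u w)
      have e12 := hsplit2 (fun w => (addOwn T u S').dist u w)
      have e13 := hsplit3 (fun w => (addOwn T u S').dist u w)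
      have e21 := hsplit1 (fun w => (addOwn T u S2).dist u w)
      have e22 := hsplit2 (fun w => (addOwn T u S2).dist u w)
      have e23 := hsplit3 (fun w => (addOwn T u S2).dist u w)
      omega
    have hxS' : x ∉ S' := by
      intro h
      rcases Finset.mem_insert.mp h with h | h
      · exact hxnw0 h
      · exact hS2x (Finset.mem_of_mem_erase h)
    have hle2 : uCost α T u S2 ≤ uCost α T u S' :=
      hS2opt S' hS'u hxS' (by rw [hS'card]; exact hS2c)
    have hltc : uCost α T u S' < uCost α T u S2 := by
      rw [hcost', hcost2]
      refine EReal.coe_lt_coe_iff.mpr ?_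
      rw [hS'card]
      have hc : (∑ w : V, ((addOwn T u S').dist u w : ℝ)) + 1
          ≤ ∑ w : V, ((addOwn T u S2).dist u w : ℝ) := by exact_mod_cast hSig
      linarith
    exact (LT.lt.not_ge hltc) hle2
end

section
/- For every β < 3/2 there exists a finite agent set V, an edge price α > 0, and a strategy profile that is a Sum greedy equilibrium but not a β-approximate Sum Nash equilibrium; that is, some agent's current cost exceeds β times the minimum cost she can achieve by unilaterally changing her strategy. -/
open scoped Classical

namespace NG

/-! ### Generic distance lemmas -/

section DistLemmas
variable {V : Type*} [Fintype V] {G : SimpleGraph V} {v w z : V}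

lemma indGraph_adj {V' : Type*} {S : V' → Finset V'} {u v' : V'} :
    (indGraph S).Adj u v' ↔ u ≠ v' ∧ (u ∈ S v' ∨ v' ∈ S u) := Iff.rfl

lemma dist_ge_two (hr : G.Reachable v w) (hne : w ≠ v) (hadj : ¬ G.Adj v w) :
    2 ≤ G.dist v w := by
  have h1 : G.dist v w ≠ 0 := by
    rw [SimpleGraph.dist_ne_zero_iff_ne_and_reachable]; exact ⟨hne.symm, hr⟩
  have h2 : G.dist v w ≠ 1 := fun h => hadj (SimpleGraph.dist_eq_one_iff_adj.mp h)
  omega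

lemma dist_ge_three (hr : G.Reachable v w) (hne : w ≠ v) (hadj : ¬ G.Adj v w)
    (hcom : ∀ x, G.Adj v x → ¬ G.Adj x w) : 3 ≤ G.dist v w := by
  have h2 : 2 ≤ G.dist v w := dist_ge_two hr hne hadj
  rcases Nat.lt_or_ge (G.dist v w) 3 with h | h
  · exfalso
    have hd : G.dist v w = 2 := by omega
    obtain ⟨p, hp⟩ := hr.exists_walk_length_eq_dist
    rw [hd] at hp
    cases p with
    | nil => simp at hp
    | cons h1 q =>
      cases q with
      | nil => simp at hp
      | cons h2' q' =>
        cases q' with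
        | nil => exact hcom _ h1 h2'
        | cons h3 q'' => simp [SimpleGraph.Walk.length_cons] at hp
  · exact h

lemma g_sum (v : V) (N : Finset V) (hvN : v ∉ N) :
    ∑ w ∈ Finset.univ.erase v, (if w ∈ N then (1:ℝ) else 2)
      = 2 * ((Fintype.card V : ℝ) - 1) - N.card := by
  have hsplit : ∀ w : V, (if w ∈ N then (1:ℝ) else 2) = 2 - (if w ∈ N then (1:ℝ) else 0) := by
    intro w; split_ifs <;> ring
  simp only [hsplit]
  rw [Finset.sum_sub_distrib, Finset.sum_const, Finset.sum_ite_mem]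
  have hcard : (Finset.univ.erase v).card = Fintype.card V - 1 := by
    rw [Finset.card_erase_of_mem (Finset.mem_univ v), Finset.card_univ]
  have hinter : (Finset.univ.erase v) ∩ N = N := by
    ext w
    simp only [Finset.mem_inter, Finset.mem_erase, Finset.mem_univ, and_true]
    constructor
    · exact fun h => h.2
    · intro h
      exact ⟨fun he => hvN (he ▸ h), h⟩
  rw [hcard, hinter, Finset.sum_const]
  have h1 : 1 ≤ Fintype.card V := Fintype.card_pos_iff.mpr ⟨v⟩
  have hc1 : ((Fintype.card V - 1 : ℕ) : ℝ) = (Fintype.card V : ℝ) - 1 := by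
    rw [Nat.cast_sub h1]; norm_num
  simp only [nsmul_eq_mul, hc1]
  ring

lemma g_le_dist (hr : ∀ w, G.Reachable v w) (N : Finset V)
    (hN : ∀ w, G.Adj v w → w ∈ N) :
    ∀ w ∈ Finset.univ.erase v, (if w ∈ N then (1:ℝ) else 2) ≤ (G.dist v w : ℝ) := by
  intro w hw
  have hne : w ≠ v := (Finset.mem_erase.mp hw).1
  split_ifs with hmem
  · have := (hr w).pos_dist_of_ne hne.symm
    exact_mod_cast this
  · have := dist_ge_two (hr w) hne (fun h => hmem (hN w h))
    exact_mod_cast this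

lemma sumDist_lb (hr : ∀ w, G.Reachable v w) (N : Finset V) (hvN : v ∉ N)
    (hN : ∀ w, G.Adj v w → w ∈ N) :
    2 * ((Fintype.card V : ℝ) - 1) - N.card ≤ ∑ w, (G.dist v w : ℝ) := by
  have hsum : ∑ w, (G.dist v w : ℝ)
      = (G.dist v v : ℝ) + ∑ w ∈ Finset.univ.erase v, (G.dist v w : ℝ) :=
    (Finset.add_sum_erase _ _ (Finset.mem_univ v)).symm
  rw [hsum, SimpleGraph.dist_self]
  rw [← g_sum v N hvN]
  have := Finset.sum_le_sum (g_le_dist hr N hN)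
  push_cast at this ⊢
  linarith

lemma sumDist_lb3 (hr : ∀ w, G.Reachable v w) (N : Finset V) (hvN : v ∉ N)
    (hN : ∀ w, G.Adj v w → w ∈ N) (hz : z ≠ v) (hzN : z ∉ N)
    (hcom : ∀ x, G.Adj v x → ¬ G.Adj x z) :
    2 * ((Fintype.card V : ℝ) - 1) - N.card + 1 ≤ ∑ w, (G.dist v w : ℝ) := by
  have hsum : ∑ w, (G.dist v w : ℝ)
      = (G.dist v v : ℝ) + ∑ w ∈ Finset.univ.erase v, (G.dist v w : ℝ) :=
    (Finset.add_sum_erase _ _ (Finset.mem_univ v)).symm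
  have hzmem : z ∈ Finset.univ.erase v := Finset.mem_erase.mpr ⟨hz, Finset.mem_univ z⟩
  have hsum2 : ∑ w ∈ Finset.univ.erase v, (G.dist v w : ℝ)
      = (G.dist v z : ℝ) + ∑ w ∈ (Finset.univ.erase v).erase z, (G.dist v w : ℝ) :=
    (Finset.add_sum_erase _ _ hzmem).symm
  have hgsum2 : ∑ w ∈ Finset.univ.erase v, (if w ∈ N then (1:ℝ) else 2)
      = (if z ∈ N then (1:ℝ) else 2)
        + ∑ w ∈ (Finset.univ.erase v).erase z, (if w ∈ N then (1:ℝ) else 2) :=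
    (Finset.add_sum_erase _ _ hzmem).symm
  have hz3 : (3:ℝ) ≤ (G.dist v z : ℝ) := by
    have hnadj : ¬ G.Adj v z := fun h => hzN (hN z h)
    exact_mod_cast dist_ge_three (hr z) hz hnadj hcom
  have hrest : ∑ w ∈ (Finset.univ.erase v).erase z, (if w ∈ N then (1:ℝ) else 2)
      ≤ ∑ w ∈ (Finset.univ.erase v).erase z, (G.dist v w : ℝ) := by
    refine Finset.sum_le_sum ?_
    intro w hw
    exact g_le_dist hr N hN w (Finset.mem_of_mem_erase hw)
  have hgs := g_sum v N hvN
  rw [if_neg hzN] at hgsum2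
  rw [hsum, SimpleGraph.dist_self, hsum2]
  push_cast
  linarith

lemma dist_le_one {u w : V} (h : G.Adj u w) : (G.dist u w : ℝ) ≤ 1 := by
  exact_mod_cast (SimpleGraph.dist_eq_one_iff_adj.mpr h).le

lemma dist_le_two {u x w : V} (h1 : G.Adj u x) (h2 : G.Adj x w) : (G.dist u w : ℝ) ≤ 2 := by
  have := SimpleGraph.dist_le (SimpleGraph.Walk.cons h1 (SimpleGraph.Walk.cons h2 SimpleGraph.Walk.nil))
  simp only [SimpleGraph.Walk.length_cons, SimpleGraph.Walk.length_nil] at this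
  exact_mod_cast this

end DistLemmas

/-! ### The construction: complete bipartite profile on `Fin (k+2)` -/

variable {k : ℕ}

def mid (k : ℕ) : Finset (Fin (k+2)) := Finset.univ.filter (fun w => 2 ≤ w.val)

def Sstar (k : ℕ) : Fin (k+2) → Finset (Fin (k+2)) :=
  fun v => if v = 0 then mid k else if v = 1 then ∅ else {1}

lemma mem_mid {w : Fin (k+2)} : w ∈ mid k ↔ 2 ≤ w.val := by simp [mid]

lemma val0 : ((0 : Fin (k+2)) : ℕ) = 0 := rfl
lemma val1 : ((1 : Fin (k+2)) : ℕ) = 1 := rfl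

lemma ne01 : (0 : Fin (k+2)) ≠ 1 := by
  intro h; have := congrArg Fin.val h; simp [val0, val1] at this

lemma fin_tri (w : Fin (k+2)) : w = 0 ∨ w = 1 ∨ 2 ≤ w.val := by
  by_cases h0 : w = 0
  · exact Or.inl h0
  by_cases h1 : w = 1
  · exact Or.inr (Or.inl h1)
  refine Or.inr (Or.inr ?_)
  have hv0 : w.val ≠ 0 := fun h => h0 (Fin.ext (by simp [h, val0]))
  have hv1 : w.val ≠ 1 := fun h => h1 (Fin.ext (by simp [h, val1]))
  omega

lemma mid_ne0 {w : Fin (k+2)} (h : 2 ≤ w.val) : w ≠ 0 := by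
  intro he; rw [he] at h; simp [val0] at h

lemma mid_ne1 {w : Fin (k+2)} (h : 2 ≤ w.val) : w ≠ 1 := by
  intro he; rw [he] at h; simp [val1] at h

lemma zero_not_mid : (0 : Fin (k+2)) ∉ mid k := fun h => mid_ne0 (mem_mid.mp h) rfl
lemma one_not_mid : (1 : Fin (k+2)) ∉ mid k := fun h => mid_ne1 (mem_mid.mp h) rfl

lemma Sstar_zero : Sstar k 0 = mid k := by simp [Sstar]
lemma Sstar_one : Sstar k 1 = ∅ := by simp [Sstar, ne01.symm]
lemma Sstar_mid {v : Fin (k+2)} (h : 2 ≤ v.val) : Sstar k v = {1} := by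
  simp [Sstar, mid_ne0 h, mid_ne1 h]

lemma zero_not_mem_Sstar (w : Fin (k+2)) : (0 : Fin (k+2)) ∉ Sstar k w := by
  rcases fin_tri w with h | h | h
  · rw [h, Sstar_zero]; exact zero_not_mid
  · rw [h, Sstar_one]; simp
  · rw [Sstar_mid h]; simp [ne01]

lemma mem_Sstar_cases {u w : Fin (k+2)} (h : u ∈ Sstar k w) :
    (w = 0 ∧ 2 ≤ u.val) ∨ u = 1 := by
  rcases fin_tri w with hw | hw | hw
  · rw [hw, Sstar_zero] at h; exact Or.inl ⟨hw, mem_mid.mp h⟩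
  · rw [hw, Sstar_one] at h; simp at h
  · rw [Sstar_mid hw] at h; exact Or.inr (Finset.mem_singleton.mp h)

lemma one_mem_Sstar {w : Fin (k+2)} (h : (1 : Fin (k+2)) ∈ Sstar k w) : w ∈ mid k := by
  rcases fin_tri w with hw | hw | hw
  · rw [hw, Sstar_zero] at h; exact absurd h one_not_mid
  · rw [hw, Sstar_one] at h; simp at h
  · exact mem_mid.mpr hw

lemma mid_eq : mid k = (Finset.univ.erase 0).erase 1 := by
  ext w
  simp only [mem_mid, Finset.mem_erase, Finset.mem_univ, and_true]
  constructor
  · intro h; exact ⟨mid_ne1 h, mid_ne0 h⟩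
  · rintro ⟨h1, h0⟩
    rcases fin_tri w with h | h | h
    · exact absurd h h0
    · exact absurd h h1
    · exact h

lemma card_mid : (mid k).card = k := by
  rw [mid_eq, Finset.card_erase_of_mem, Finset.card_erase_of_mem (Finset.mem_univ 0)]
  · simp
  · exact Finset.mem_erase.mpr ⟨ne01.symm, Finset.mem_univ 1⟩

/-! ### Base graph facts -/

lemma adj_base_0mid {w : Fin (k+2)} (h : 2 ≤ w.val) : (indGraph (Sstar k)).Adj 0 w :=
  ⟨(mid_ne0 h).symm, Or.inr (by rw [Sstar_zero]; exact mem_mid.mpr h)⟩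

lemma adj_base_1mid {w : Fin (k+2)} (h : 2 ≤ w.val) : (indGraph (Sstar k)).Adj 1 w :=
  ⟨(mid_ne1 h).symm, Or.inl (by rw [Sstar_mid h]; simp)⟩

def c2 (k : ℕ) (hk : 1 ≤ k) : Fin (k+2) := ⟨2, by omega⟩

lemma c2_mid (hk : 1 ≤ k) : 2 ≤ (c2 k hk).val := le_refl 2

lemma conn_base (hk : 1 ≤ k) : (indGraph (Sstar k)).Connected := by
  rw [SimpleGraph.connected_iff]
  refine ⟨?_, ⟨0⟩⟩
  have key : ∀ w : Fin (k+2), (indGraph (Sstar k)).Reachable w 0 := by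
    intro w
    rcases fin_tri w with h | h | h
    · rw [h]
    · rw [h]
      exact ((adj_base_1mid (c2_mid hk)).reachable).trans
        (adj_base_0mid (c2_mid hk)).symm.reachable
    · exact (adj_base_0mid h).symm.reachable
  intro u v
  exact (key u).trans (key v).symm

/-! ### Sum evaluation helpers -/

lemma sum_split (f : Fin (k+2) → ℝ) :
    ∑ w, f w = f 0 + (f 1 + ∑ w ∈ mid k, f w) := by
  rw [mid_eq]
  rw [← Finset.add_sum_erase _ f (Finset.mem_univ 0)]
  congr 1
  rw [← Finset.add_sum_erase _ f (Finset.mem_erase.mpr ⟨ne01.symm, Finset.mem_univ 1⟩)]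

lemma sum_ub2 {f : Fin (k+2) → ℝ} {a b c : ℝ} (h0 : f 0 ≤ a) (h1 : f 1 ≤ b)
    (hrest : ∀ w, 2 ≤ w.val → f w ≤ c) : ∑ w, f w ≤ a + b + k * c := by
  rw [sum_split]
  have hmid : ∑ w ∈ mid k, f w ≤ (k : ℝ) * c := by
    calc ∑ w ∈ mid k, f w ≤ ∑ _w ∈ mid k, c :=
          Finset.sum_le_sum (fun w hw => hrest w (mem_mid.mp hw))
      _ = (k:ℝ) * c := by rw [Finset.sum_const, card_mid, nsmul_eq_mul]
  linarith

lemma sum_ub3 {f : Fin (k+2) → ℝ} {i : Fin (k+2)} (hi : 2 ≤ i.val)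
    (h0 : f 0 ≤ 1) (h1 : f 1 ≤ 1) (hii : f i ≤ 0)
    (hrest : ∀ w, 2 ≤ w.val → w ≠ i → f w ≤ 2) : ∑ w, f w ≤ 2 * k := by
  have hk : 1 ≤ k := by have := i.isLt; omega
  rw [sum_split]
  have hi' : i ∈ mid k := mem_mid.mpr hi
  have hsplit : ∑ w ∈ mid k, f w = f i + ∑ w ∈ (mid k).erase i, f w :=
    (Finset.add_sum_erase _ f hi').symm
  have hcard : ((mid k).erase i).card = k - 1 := by
    rw [Finset.card_erase_of_mem hi', card_mid]
  have hrest' : ∑ w ∈ (mid k).erase i, f w ≤ ((k-1 : ℕ) : ℝ) * 2 := by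
    calc ∑ w ∈ (mid k).erase i, f w ≤ ∑ _w ∈ (mid k).erase i, (2:ℝ) :=
          Finset.sum_le_sum (fun w hw => hrest w (mem_mid.mp (Finset.mem_of_mem_erase hw))
            (Finset.ne_of_mem_erase hw))
      _ = ((k-1:ℕ):ℝ) * 2 := by rw [Finset.sum_const, hcard, nsmul_eq_mul]
  have hc : ((k-1:ℕ):ℝ) = (k:ℝ) - 1 := by rw [Nat.cast_sub hk]; norm_num
  rw [hc] at hrest'
  linarith

/-! ### Updated-profile neighbourhood bounds -/

lemma adj_update_mem {n : ℕ} {S : Fin n → Finset (Fin n)} {v : Fin n} {T : Finset (Fin n)}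
    {w : Fin n} (h : (indGraph (Function.update S v T)).Adj v w) : w ∈ T ∨ v ∈ S w := by
  obtain ⟨hne, h1 | h2⟩ := h
  · rw [Function.update_apply] at h1
    split_ifs at h1 with hw
    · exact absurd hw.symm hne
    · exact Or.inr h1
  · rw [Function.update_self] at h2
    exact Or.inl h2

lemma hN_zero {T : Finset (Fin (k+2))} :
    ∀ w, (indGraph (Function.update (Sstar k) 0 T)).Adj 0 w → w ∈ T := by
  intro w h
  rcases adj_update_mem h with h | h
  · exact h
  · exact absurd h (zero_not_mem_Sstar w)

lemma hN_one {T : Finset (Fin (k+2))} :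
    ∀ w, (indGraph (Function.update (Sstar k) 1 T)).Adj 1 w → w ∈ T ∪ mid k := by
  intro w h
  rcases adj_update_mem h with h | h
  · exact Finset.mem_union_left _ h
  · exact Finset.mem_union_right _ (one_mem_Sstar h)

lemma hN_mid {T : Finset (Fin (k+2))} {v : Fin (k+2)} (hv : 2 ≤ v.val) :
    ∀ w, (indGraph (Function.update (Sstar k) v T)).Adj v w → w ∈ insert 0 T := by
  intro w h
  rcases adj_update_mem h with h | h
  · exact Finset.mem_insert_of_mem h
  · rcases mem_Sstar_cases h with ⟨h0, _⟩ | h1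
    · rw [h0]; exact Finset.mem_insert_self _ _
    · exact absurd h1 (mid_ne1 hv)

lemma move_bound {S' : Fin (k+2) → Finset (Fin (k+2))} {v : Fin (k+2)}
    (hc : (indGraph S').Connected) (N : Finset (Fin (k+2))) (hvN : v ∉ N)
    (hN : ∀ w, (indGraph S').Adj v w → w ∈ N) :
    2*(k:ℝ) + 2 - N.card ≤ ∑ w, ((indGraph S').dist v w : ℝ) := by
  have h := sumDist_lb (G := indGraph S') (fun w => hc.preconnected v w) N hvN hN
  have hcV : (Fintype.card (Fin (k+2)) : ℝ) = (k:ℝ) + 2 := by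
    rw [Fintype.card_fin]; push_cast; ring
  rw [hcV] at h
  linarith

lemma move_bound3 {S' : Fin (k+2) → Finset (Fin (k+2))} {v z : Fin (k+2)}
    (hc : (indGraph S').Connected) (N : Finset (Fin (k+2))) (hvN : v ∉ N)
    (hN : ∀ w, (indGraph S').Adj v w → w ∈ N) (hz : z ≠ v) (hzN : z ∉ N)
    (hcom : ∀ x, (indGraph S').Adj v x → ¬ (indGraph S').Adj x z) :
    2*(k:ℝ) + 3 - N.card ≤ ∑ w, ((indGraph S').dist v w : ℝ) := by
  have h := sumDist_lb3 (G := indGraph S') (fun w => hc.preconnected v w) N hvN hN hz hzN hcom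
  have hcV : (Fintype.card (Fin (k+2)) : ℝ) = (k:ℝ) + 2 := by
    rw [Fintype.card_fin]; push_cast; ring
  rw [hcV] at h
  linarith

/-! ### Base cost bounds -/

lemma not_lt_cost {n : ℕ} {α : ℝ} {S S' : Fin n → Finset (Fin n)} {v : Fin n} {Bv : ℝ}
    (hb : sumCost α S v ≤ ((Bv : ℝ) : EReal))
    (h : (indGraph S').Connected →
      Bv ≤ α * ((S' v).card : ℝ) + ∑ w, (((indGraph S').dist v w : ℕ) : ℝ)) :
    ¬ sumCost α S' v < sumCost α S v := by
  intro hlt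
  unfold sumCost at hlt
  by_cases hc : (indGraph S').Connected
  · rw [if_pos hc] at hlt
    have h2 : sumCost α S v
        ≤ ((α * ((S' v).card : ℝ) + ∑ w, (((indGraph S').dist v w : ℕ) : ℝ) : ℝ) : EReal) :=
      hb.trans (EReal.coe_le_coe_iff.mpr (h hc))
    exact absurd hlt (not_lt.mpr h2)
  · rw [if_neg hc] at hlt
    exact absurd (hlt.trans_le le_top) (lt_irrefl _)

lemma cost_ub0 (hk : 1 ≤ k) : sumCost 2 (Sstar k) 0 ≤ (((3*(k:ℝ)+2 : ℝ)) : EReal) := by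
  unfold sumCost
  rw [if_pos (conn_base hk)]
  rw [EReal.coe_le_coe_iff]
  have hcard : ((Sstar k 0).card : ℝ) = k := by rw [Sstar_zero, card_mid]
  have hsum : ∑ w, ((indGraph (Sstar k)).dist 0 w : ℝ) ≤ 0 + 2 + (k:ℝ) * 1 := by
    apply sum_ub2
    · simp
    · exact dist_le_two (adj_base_0mid (c2_mid hk)) (adj_base_1mid (c2_mid hk)).symm
    · intro w hw; exact dist_le_one (adj_base_0mid hw)
  rw [hcard]
  linarith

lemma cost_lb0 (hk : 1 ≤ k) : (((3*(k:ℝ)+2 : ℝ)) : EReal) ≤ sumCost 2 (Sstar k) 0 := by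
  unfold sumCost
  rw [if_pos (conn_base hk)]
  rw [EReal.coe_le_coe_iff]
  have hcard : ((Sstar k 0).card : ℝ) = k := by rw [Sstar_zero, card_mid]
  have hN : ∀ w, (indGraph (Sstar k)).Adj 0 w → w ∈ mid k := by
    rintro w ⟨hne, h | h⟩
    · exact absurd h (zero_not_mem_Sstar w)
    · rwa [Sstar_zero] at h
  have hsum := sumDist_lb (G := indGraph (Sstar k)) (v := 0)
    (fun w => (conn_base hk).preconnected 0 w) (mid k) zero_not_mid hN
  have hcV : (Fintype.card (Fin (k+2)) : ℝ) = (k:ℝ) + 2 := by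
    rw [Fintype.card_fin]; push_cast; ring
  rw [hcV, card_mid] at hsum
  rw [hcard]
  linarith

lemma cost_ub1 (hk : 1 ≤ k) : sumCost 2 (Sstar k) 1 ≤ (((k:ℝ)+2 : ℝ) : EReal) := by
  unfold sumCost
  rw [if_pos (conn_base hk)]
  rw [EReal.coe_le_coe_iff]
  have hcard : ((Sstar k 1).card : ℝ) = 0 := by rw [Sstar_one]; simp
  have hsum : ∑ w, ((indGraph (Sstar k)).dist 1 w : ℝ) ≤ 2 + 0 + (k:ℝ) * 1 := by
    apply sum_ub2
    · exact dist_le_two (adj_base_1mid (c2_mid hk)) (adj_base_0mid (c2_mid hk)).symm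
    · simp
    · intro w hw; exact dist_le_one (adj_base_1mid hw)
  rw [hcard]
  linarith

lemma cost_ubmid (hk : 1 ≤ k) {v : Fin (k+2)} (hv : 2 ≤ v.val) :
    sumCost 2 (Sstar k) v ≤ ((2*(k:ℝ)+2 : ℝ) : EReal) := by
  unfold sumCost
  rw [if_pos (conn_base hk)]
  rw [EReal.coe_le_coe_iff]
  have hcard : ((Sstar k v).card : ℝ) = 1 := by rw [Sstar_mid hv]; simp
  have hsum : ∑ w, ((indGraph (Sstar k)).dist v w : ℝ) ≤ 2 * k := by
    apply sum_ub3 hv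
    · exact dist_le_one (adj_base_0mid hv).symm
    · exact dist_le_one (adj_base_1mid hv).symm
    · simp
    · intro w hw hwv
      exact dist_le_two (adj_base_0mid hv).symm (adj_base_0mid hw)
  rw [hcard]
  linarith

/-! ### The deviation graph (star centered at 1) -/

lemma adj_dev_01 : (indGraph (Function.update (Sstar k) 0 ({1} : Finset (Fin (k+2))))).Adj 0 1 :=
  ⟨ne01, Or.inr (by rw [Function.update_self]; simp)⟩

lemma adj_dev_1mid {w : Fin (k+2)} (hw : 2 ≤ w.val) :
    (indGraph (Function.update (Sstar k) 0 ({1} : Finset (Fin (k+2))))).Adj 1 w :=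
  ⟨(mid_ne1 hw).symm, Or.inl (by
    rw [Function.update_of_ne (mid_ne0 hw), Sstar_mid hw]; simp)⟩

lemma conn_dev : (indGraph (Function.update (Sstar k) 0 ({1} : Finset (Fin (k+2))))).Connected := by
  rw [SimpleGraph.connected_iff]
  refine ⟨?_, ⟨0⟩⟩
  have key : ∀ w : Fin (k+2),
      (indGraph (Function.update (Sstar k) 0 ({1} : Finset (Fin (k+2))))).Reachable w 1 := by
    intro w
    rcases fin_tri w with h | h | h
    · rw [h]; exact adj_dev_01.reachable
    · rw [h]
    · exact (adj_dev_1mid h).symm.reachable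
  intro u v
  exact (key u).trans (key v).symm

end NG


/-- For every `β < 3/2` there is a Sum greedy equilibrium that is not a
`β`-approximate Sum Nash equilibrium. -/
theorem sumGE_approx_lower_bound (β : ℝ) (hβ1 : 1 ≤ β) (hβ : β < 3 / 2) :
    ∃ (n : ℕ) (α : ℝ) (S : Fin n → Finset (Fin n)),
      2 ≤ n ∧ 0 < α ∧ ValidProfile S ∧
      isGE (sumCost α) S ∧ ¬ isApproxNE β (sumCost α) S := by
  classical
  set γ : ℝ := (3*β - 2)/(3 - 2*β) with hγ
  set k : ℕ := ⌈γ⌉₊ + 3 with hkdef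
  have hk1 : 1 ≤ k := by omega
  have hd : (0:ℝ) < 3 - 2*β := by linarith
  have hceil : γ ≤ (⌈γ⌉₊ : ℝ) := Nat.le_ceil γ
  have hkγ : γ ≤ (k:ℝ) - 3 := by
    rw [hkdef]; push_cast; linarith
  have h2 : (3*β - 2) ≤ ((k:ℝ) - 3) * (3 - 2*β) := by
    have := (div_le_iff₀ hd).mp hkγ
    linarith
  have hkk : β * (2*(k:ℝ)+3) < 3*(k:ℝ)+2 := by nlinarith
  refine ⟨k + 2, 2, NG.Sstar k, by omega, by norm_num, ?_, ?_, ?_⟩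
  · -- ValidProfile
    intro v
    rcases NG.fin_tri v with hv | hv | hv
    · rw [hv, NG.Sstar_zero]; exact NG.zero_not_mid
    · rw [hv, NG.Sstar_one]; simp
    · rw [NG.Sstar_mid hv]
      simpa using NG.mid_ne1 hv
  · -- isGE
    refine ⟨?_, ?_, ?_⟩
    · -- add a single edge
      intro v x hxv hxS
      rcases NG.fin_tri v with hv | hv | hv
      · subst hv
        rw [NG.Sstar_zero] at hxS ⊢
        apply NG.not_lt_cost (NG.cost_ub0 hk1)
        intro hc
        rw [Function.update_self]
        have hvN : (0 : Fin (k+2)) ∉ insert x (NG.mid k) := by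
          simp only [Finset.mem_insert]
          rintro (h | h)
          · exact hxv h.symm
          · exact NG.zero_not_mid h
        have hM := NG.move_bound hc (insert x (NG.mid k)) hvN NG.hN_zero
        have hcard : (((insert x (NG.mid k)).card : ℕ) : ℝ) = (k:ℝ) + 1 := by
          rw [Finset.card_insert_of_notMem hxS, NG.card_mid]; push_cast; ring
        rw [hcard] at hM ⊢
        linarith
      · subst hv
        rw [NG.Sstar_one] at hxS ⊢
        apply NG.not_lt_cost (NG.cost_ub1 hk1)
        intro hc
        rw [Function.update_self]
        have hvN : (1 : Fin (k+2)) ∉ (insert x ∅) ∪ NG.mid k := by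
          simp only [Finset.mem_union, Finset.mem_insert, Finset.notMem_empty, or_false]
          rintro (h | h)
          · exact hxv h.symm
          · exact NG.one_not_mid h
        have hM := NG.move_bound hc ((insert x ∅) ∪ NG.mid k) hvN NG.hN_one
        have hcard : (((insert x (∅ : Finset (Fin (k+2)))).card : ℕ) : ℝ) = 1 := by simp
        have hNcard : ((((insert x ∅) ∪ NG.mid k).card : ℕ) : ℝ) ≤ 1 + k := by
          have := Finset.card_union_le (insert x (∅ : Finset (Fin (k+2)))) (NG.mid k)
          have h1 : (insert x (∅ : Finset (Fin (k+2)))).card = 1 := by simp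
          rw [h1, NG.card_mid] at this
          exact_mod_cast this
        rw [hcard]
        linarith
      · rw [NG.Sstar_mid hv] at hxS ⊢
        apply NG.not_lt_cost (NG.cost_ubmid hk1 hv)
        intro hc
        rw [Function.update_self]
        have hvN : v ∉ insert (0 : Fin (k+2)) (insert x ({1} : Finset (Fin (k+2)))) := by
          simp only [Finset.mem_insert, Finset.mem_singleton]
          rintro (h | h | h)
          · exact NG.mid_ne0 hv h
          · exact hxv h.symm
          · exact NG.mid_ne1 hv h
        have hM := NG.move_bound hc _ hvN (NG.hN_mid hv)
        have hcardT : (((insert x ({1} : Finset (Fin (k+2)))).card : ℕ) : ℝ) = 2 := by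
          rw [Finset.card_insert_of_notMem hxS]; simp
        have hcardN : (((insert (0:Fin (k+2)) (insert x ({1} : Finset (Fin (k+2))))).card : ℕ) : ℝ) ≤ 3 := by
          have h1 := Finset.card_insert_le (0:Fin (k+2)) (insert x ({1} : Finset (Fin (k+2))))
          have h2' : (insert x ({1} : Finset (Fin (k+2)))).card = 2 := by
            rw [Finset.card_insert_of_notMem hxS]; simp
          rw [h2'] at h1
          exact_mod_cast h1
        rw [hcardT]
        linarith
    · -- remove a single edge
      intro v x hx
      rcases NG.fin_tri v with hv | hv | hv
      · subst hv
        rw [NG.Sstar_zero] at hx ⊢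
        have hx2 : 2 ≤ x.val := NG.mem_mid.mp hx
        apply NG.not_lt_cost (NG.cost_ub0 hk1)
        intro hc
        rw [Function.update_self]
        have hvN : (0 : Fin (k+2)) ∉ (NG.mid k).erase x :=
          fun h => NG.zero_not_mid (Finset.mem_of_mem_erase h)
        have hcom : ∀ w, (indGraph (Function.update (NG.Sstar k) 0 ((NG.mid k).erase x))).Adj 0 w →
            ¬ (indGraph (Function.update (NG.Sstar k) 0 ((NG.mid k).erase x))).Adj w x := by
          intro w hw hadj
          have hwT := NG.hN_zero _ hw
          have hwmid := NG.mem_mid.mp (Finset.mem_of_mem_erase hwT)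
          obtain ⟨hne, h | h⟩ := hadj
          · rw [Function.update_of_ne (NG.mid_ne0 hx2), NG.Sstar_mid hx2] at h
            exact NG.mid_ne1 hwmid (Finset.mem_singleton.mp h)
          · rw [Function.update_of_ne (NG.mid_ne0 hwmid), NG.Sstar_mid hwmid] at h
            exact NG.mid_ne1 hx2 (Finset.mem_singleton.mp h)
        have hM := NG.move_bound3 hc ((NG.mid k).erase x) hvN NG.hN_zero
          (NG.mid_ne0 hx2) (Finset.notMem_erase x _) hcom
        have hcard : ((((NG.mid k).erase x).card : ℕ) : ℝ) = (k:ℝ) - 1 := by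
          rw [Finset.card_erase_of_mem hx, NG.card_mid, Nat.cast_sub hk1]; norm_num
        rw [hcard] at hM ⊢
        linarith
      · subst hv
        rw [NG.Sstar_one] at hx
        exact absurd hx (Finset.notMem_empty x)
      · rw [NG.Sstar_mid hv] at hx ⊢
        have hx1 : x = 1 := Finset.mem_singleton.mp hx
        subst hx1
        rw [Finset.erase_singleton]
        apply NG.not_lt_cost (NG.cost_ubmid hk1 hv)
        intro hc
        rw [Function.update_self]
        have hvN : v ∉ insert (0 : Fin (k+2)) (∅ : Finset (Fin (k+2))) := by
          simp only [Finset.mem_insert, Finset.notMem_empty, or_false]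
          exact NG.mid_ne0 hv
        have hcom : ∀ w, (indGraph (Function.update (NG.Sstar k) v ∅)).Adj v w →
            ¬ (indGraph (Function.update (NG.Sstar k) v ∅)).Adj w 1 := by
          intro w hw hadj
          have hwN := NG.hN_mid hv _ hw
          have hw0 : w = 0 := by simpa using hwN
          subst hw0
          obtain ⟨hne, h | h⟩ := hadj
          · rw [Function.update_of_ne (NG.mid_ne1 hv).symm, NG.Sstar_one] at h
            simp at h
          · rw [Function.update_of_ne (NG.mid_ne0 hv).symm, NG.Sstar_zero] at h
            exact NG.one_not_mid h
        have hM := NG.move_bound3 hc _ hvN (NG.hN_mid hv)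
          (NG.mid_ne1 hv).symm (by simp [NG.ne01.symm]) hcom
        have hcardN : (((insert (0:Fin (k+2)) (∅:Finset (Fin (k+2)))).card : ℕ) : ℝ) = 1 := by
          simp
        rw [hcardN] at hM
        have hcardT : (((∅ : Finset (Fin (k+2))).card : ℕ) : ℝ) = 0 := by simp
        rw [hcardT]
        linarith
    · -- swap a single edge
      intro v x y hx hyv hyS
      rcases NG.fin_tri v with hv | hv | hv
      · subst hv
        rw [NG.Sstar_zero] at hx hyS ⊢
        have hx2 : 2 ≤ x.val := NG.mem_mid.mp hx
        apply NG.not_lt_cost (NG.cost_ub0 hk1)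
        intro hc
        rw [Function.update_self]
        have hvN : (0 : Fin (k+2)) ∉ insert y ((NG.mid k).erase x) := by
          simp only [Finset.mem_insert]
          rintro (h | h)
          · exact hyv h.symm
          · exact NG.zero_not_mid (Finset.mem_of_mem_erase h)
        have hM := NG.move_bound hc _ hvN NG.hN_zero
        have hyT : y ∉ (NG.mid k).erase x := fun h => hyS (Finset.mem_of_mem_erase h)
        have hcard : (((insert y ((NG.mid k).erase x)).card : ℕ) : ℝ) = k := by
          rw [Finset.card_insert_of_notMem hyT, Finset.card_erase_of_mem hx, NG.card_mid]
          have : k - 1 + 1 = k := by omega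
          rw [this]
        rw [hcard] at hM ⊢
        linarith
      · subst hv
        rw [NG.Sstar_one] at hx
        exact absurd hx (Finset.notMem_empty x)
      · rw [NG.Sstar_mid hv] at hx hyS ⊢
        have hx1 : x = 1 := Finset.mem_singleton.mp hx
        subst hx1
        rw [Finset.erase_singleton]
        apply NG.not_lt_cost (NG.cost_ubmid hk1 hv)
        intro hc
        rw [Function.update_self]
        have hvN : v ∉ insert (0 : Fin (k+2)) (insert y (∅ : Finset (Fin (k+2)))) := by
          simp only [Finset.mem_insert, Finset.notMem_empty, or_false]
          rintro (h | h)
          · exact NG.mid_ne0 hv h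
          · exact hyv h.symm
        have hM := NG.move_bound hc _ hvN (NG.hN_mid hv)
        have hcardT : (((insert y (∅ : Finset (Fin (k+2)))).card : ℕ) : ℝ) = 1 := by simp
        have hcardN : (((insert (0:Fin (k+2)) (insert y (∅ : Finset (Fin (k+2))))).card : ℕ) : ℝ) ≤ 2 := by
          have h1 := Finset.card_insert_le (0:Fin (k+2)) (insert y (∅ : Finset (Fin (k+2))))
          have h2' : (insert y (∅ : Finset (Fin (k+2)))).card = 1 := by simp
          rw [h2'] at h1
          exact_mod_cast h1
        rw [hcardT]
        linarith
  · -- not a β-approximate NE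
    intro happ
    have h0T : (0 : Fin (k+2)) ∉ ({1} : Finset (Fin (k+2))) := by
      simp only [Finset.mem_singleton]
      exact NG.ne01
    have hle := happ 0 ({1} : Finset (Fin (k+2))) h0T
    set S' := Function.update (NG.Sstar k) 0 ({1} : Finset (Fin (k+2))) with hS'
    have hc : (indGraph S').Connected := NG.conn_dev
    set r : ℝ := 2 * ((S' 0).card : ℝ) + ∑ w, ((indGraph S').dist 0 w : ℝ) with hr
    have hcost' : sumCost 2 S' 0 = ((r : ℝ) : EReal) := by
      unfold sumCost
      rw [if_pos hc]
    have hcardS' : ((S' 0).card : ℝ) = 1 := by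
      rw [hS', Function.update_self]; simp
    have hsumub : ∑ w, ((indGraph S').dist 0 w : ℝ) ≤ 0 + 1 + (k:ℝ) * 2 := by
      apply NG.sum_ub2
      · simp
      · exact NG.dist_le_one NG.adj_dev_01
      · intro w hw
        exact NG.dist_le_two NG.adj_dev_01 (NG.adj_dev_1mid hw)
    have hrub : r ≤ 2*(k:ℝ) + 3 := by
      rw [hr, hcardS']
      linarith
    have hr0 : 0 ≤ r := by
      rw [hr]
      have h1 : (0:ℝ) ≤ ∑ w, ((indGraph S').dist 0 w : ℝ) :=
        Finset.sum_nonneg (fun w _ => Nat.cast_nonneg _)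
      have h2 : (0:ℝ) ≤ ((S' 0).card : ℝ) := Nat.cast_nonneg _
      linarith
    rw [hcost'] at hle
    have hmul : (β : EReal) * ((r : ℝ) : EReal) = ((β * r : ℝ) : EReal) := (EReal.coe_mul β r).symm
    rw [hmul] at hle
    have hfin : ((3*(k:ℝ)+2 : ℝ) : EReal) ≤ ((β*r : ℝ) : EReal) := le_trans (NG.cost_lb0 hk1) hle
    rw [EReal.coe_le_coe_iff] at hfin
    have hβr : β * r ≤ β * (2*(k:ℝ)+3) := mul_le_mul_of_nonneg_left hrub (by linarith)
    linarith
end
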